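/- arXiv:2006.04583 — 5 statements merged into one kernel-verified Lean document; each statement's English description precedes it below -/
import Mathlib

section
/- Let H be a finite simple graph and let G = KB(H) be its biclique graph. Then every induced path on three vertices of G is contained in an induced diamond or an induced gem of G; that is, for all vertices a, b, c of G with b adjacent to both a and c and a not adjacent to c, there exists a set S of vertices of G with {a,b,c} ⊆ S such that the subgraph of G induced by S is isomorphic to the diamond or to the gem. -/
/-!
Let `B` meet `A` and `C` while `A ∩ C = ∅`. If another biclique `D` meets all three, then
`A, C, B, D` induce a diamond. Otherwise every biclique through a vertex of `B ∩ C` that meets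
`A` equals `B`. Since an induced path `t₁ - z - t₂` of `H` (hence any two vertices at distance
at most two) lies in a biclique, playing this against a vertex of `A \ B` and one of `C \ B` shows
that `A ∩ B` and `C ∩ B` are mutually non-adjacent, so they lie in one side of `B` and have a
common neighbour `y ∈ B`. The bicliques through `y` then supply `D₂ ≠ A, B` meeting `A` and
`D₁ ≠ C, B` meeting `C`; `A - D₂ - D₁ - C` is an induced path and `B` sees all of it: a gem.
-/

open SimpleGraph

variable {V : Type}

/-- `B1`, `B2` are the two (nonempty) parts of an induced complete bipartite subgraph:
they are disjoint, each part is independent, and all edges between the parts are present. -/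
def IsCBP (H : SimpleGraph V) (B1 B2 : Set V) : Prop :=
  B1.Nonempty ∧ B2.Nonempty ∧ Disjoint B1 B2 ∧
    (∀ a ∈ B1, ∀ b ∈ B1, ¬H.Adj a b) ∧
    (∀ a ∈ B2, ∀ b ∈ B2, ¬H.Adj a b) ∧
    (∀ a ∈ B1, ∀ b ∈ B2, H.Adj a b)

/-- A set of vertices inducing a complete bipartite subgraph `K_{m,n}`, `m, n ≥ 1`. -/
def IsCompleteBipartiteSet (H : SimpleGraph V) (S : Set V) : Prop :=
  ∃ B1 B2 : Set V, IsCBP H B1 B2 ∧ B1 ∪ B2 = S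

/-- A biclique: a maximal set of vertices inducing a complete bipartite subgraph. -/
def IsBiclique (H : SimpleGraph V) (S : Set V) : Prop :=
  IsCompleteBipartiteSet H S ∧
    ∀ T : Set V, IsCompleteBipartiteSet H T → S ⊆ T → S = T

/-- The biclique graph `KB(H)`: the intersection graph of the bicliques of `H`. -/
def KB (H : SimpleGraph V) : SimpleGraph {S : Set V // IsBiclique H S} :=
  SimpleGraph.fromRel fun A B => (A.1 ∩ B.1).Nonempty

/-- The diamond: `K_4` minus one edge (here the edge `{0,1}` is missing). -/
def diamond : SimpleGraph (Fin 4) :=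
  SimpleGraph.fromRel fun i j =>
    (i, j) ∈ [((0 : Fin 4), (2 : Fin 4)), (0, 3), (1, 2), (1, 3), (2, 3)]

/-- The gem: an induced path `0-1-2-3` plus a universal vertex `4`. -/
def gem : SimpleGraph (Fin 5) :=
  SimpleGraph.fromRel fun i j =>
    (i, j) ∈ [((0 : Fin 5), (1 : Fin 5)), (1, 2), (2, 3), (0, 4), (1, 4), (2, 4), (3, 4)]

section InducedCopies

variable {α : Type} {G : SimpleGraph α}

theorem exists_induce_iso_diamond {p₀ p₁ p₂ p₃ : α}
    (h₀₁ : p₀ ≠ p₁) (n₀₁ : ¬G.Adj p₀ p₁) (h₀₂ : G.Adj p₀ p₂) (h₀₃ : G.Adj p₀ p₃)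
    (h₁₂ : G.Adj p₁ p₂) (h₁₃ : G.Adj p₁ p₃) (h₂₃ : G.Adj p₂ p₃) :
    Nonempty (G.induce (Set.range ![p₀, p₁, p₂, p₃]) ≃g diamond) := by
  have hf : Function.Injective ![p₀, p₁, p₂, p₃] := by
    intro i j hij
    fin_cases i <;> fin_cases j <;>
      simp_all [h₀₁.symm, h₀₂.ne, h₀₂.ne', h₀₃.ne, h₀₃.ne', h₁₂.ne, h₁₂.ne', h₁₃.ne, h₁₃.ne',
        h₂₃.ne, h₂₃.ne']
  let f : diamond ↪g G := ⟨⟨_, hf⟩, fun {i j} => by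
    fin_cases i <;> fin_cases j <;>
      simp [diamond, n₀₁, h₀₂, h₀₃, h₁₂, h₁₃, h₂₃, h₀₂.symm, h₀₃.symm, h₁₂.symm, h₁₃.symm,
        h₂₃.symm, mt G.adj_symm n₀₁]⟩
  exact ⟨f.isoInduceRange.symm⟩

theorem exists_induce_iso_gem {p₀ p₁ p₂ p₃ p₄ : α}
    (h₀₁ : G.Adj p₀ p₁) (h₁₂ : G.Adj p₁ p₂) (h₂₃ : G.Adj p₂ p₃)
    (n₀₂ : ¬G.Adj p₀ p₂) (n₀₃ : ¬G.Adj p₀ p₃) (n₁₃ : ¬G.Adj p₁ p₃)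
    (h₀₄ : G.Adj p₀ p₄) (h₁₄ : G.Adj p₁ p₄) (h₂₄ : G.Adj p₂ p₄) (h₃₄ : G.Adj p₃ p₄) :
    Nonempty (G.induce (Set.range ![p₀, p₁, p₂, p₃, p₄]) ≃g gem) := by
  have ne₀₂ : p₀ ≠ p₂ := by rintro rfl; exact n₀₃ h₂₃
  have ne₀₃ : p₀ ≠ p₃ := by rintro rfl; exact n₀₂ h₂₃.symm
  have ne₁₃ : p₁ ≠ p₃ := by rintro rfl; exact n₀₃ h₀₁
  have hf : Function.Injective ![p₀, p₁, p₂, p₃, p₄] := by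
    intro i j hij
    fin_cases i <;> fin_cases j <;>
      simp_all [h₀₁.ne, h₀₁.ne', h₁₂.ne, h₁₂.ne', h₂₃.ne, h₂₃.ne', ne₀₂.symm, ne₀₃.symm,
        ne₁₃.symm, h₀₄.ne, h₀₄.ne', h₁₄.ne, h₁₄.ne', h₂₄.ne, h₂₄.ne', h₃₄.ne, h₃₄.ne']
  let f : gem ↪g G := ⟨⟨_, hf⟩, fun {i j} => by
    fin_cases i <;> fin_cases j <;>
      simp [gem, h₀₁, h₁₂, h₂₃, n₀₂, n₀₃, n₁₃, h₀₄, h₁₄, h₂₄, h₃₄, h₀₁.symm, h₁₂.symm,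
        h₂₃.symm, mt G.adj_symm n₀₂, mt G.adj_symm n₀₃, mt G.adj_symm n₁₃,
        h₀₄.symm, h₁₄.symm, h₂₄.symm, h₃₄.symm]⟩
  exact ⟨f.isoInduceRange.symm⟩

end InducedCopies

section Bicliques

variable {H : SimpleGraph V} {A B C S : Set V}

theorem IsCompleteBipartiteSet.exists_isBiclique_superset [Finite V]
    (h : IsCompleteBipartiteSet H S) : ∃ T, IsBiclique H T ∧ S ⊆ T := by
  obtain ⟨T, hST, hT⟩ := Finite.exists_le_maximal h
  exact ⟨T, ⟨hT.1, fun T' hT' hTT' => hTT'.antisymm (hT.2 hT' hTT')⟩, hST⟩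

theorem isCompleteBipartiteSet_of_adj_of_adj {z t₁ t₂ : V} (h₁ : H.Adj z t₁) (h₂ : H.Adj z t₂)
    (h₁₂ : ¬H.Adj t₁ t₂) : IsCompleteBipartiteSet H {z, t₁, t₂} := by
  refine ⟨{z}, {t₁, t₂}, ⟨Set.singleton_nonempty z, Set.insert_nonempty _ _, ?_, ?_, ?_, ?_⟩,
    Set.singleton_union⟩
  · simp [h₁.ne, h₂.ne]
  · rintro _ rfl _ rfl
    exact H.irrefl
  · rintro _ (rfl | rfl) _ (rfl | rfl)
    exacts [H.irrefl, h₁₂, mt H.adj_symm h₁₂, H.irrefl]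
  · rintro _ rfl _ (rfl | rfl)
    exacts [h₁, h₂]

theorem exists_isBiclique_of_adj_of_adj [Finite V] {z t₁ t₂ : V} (h₁ : H.Adj z t₁)
    (h₂ : H.Adj z t₂) (h₁₂ : ¬H.Adj t₁ t₂) :
    ∃ E, IsBiclique H E ∧ z ∈ E ∧ t₁ ∈ E ∧ t₂ ∈ E := by
  obtain ⟨E, hE, hsub⟩ :=
    (isCompleteBipartiteSet_of_adj_of_adj h₁ h₂ h₁₂).exists_isBiclique_superset
  exact ⟨E, hE, hsub (by simp), hsub (by simp), hsub (by simp)⟩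

theorem exists_isBiclique_mem_mem_of_adj_of_adj [Finite V] {u s z : V} (hus : H.Adj u s)
    (hsz : H.Adj s z) : ∃ E, IsBiclique H E ∧ u ∈ E ∧ z ∈ E := by
  by_cases huz : H.Adj u z
  · obtain ⟨E, hE, huE, hzE, -⟩ := exists_isBiclique_of_adj_of_adj huz huz (H.irrefl)
    exact ⟨E, hE, huE, hzE⟩
  · obtain ⟨E, hE, -, huE, hzE⟩ := exists_isBiclique_of_adj_of_adj hus.symm hsz huz
    exact ⟨E, hE, huE, hzE⟩

theorem IsCompleteBipartiteSet.adj_of_adj_of_not_adj (hS : IsCompleteBipartiteSet H S)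
    {s x y : V} (hs : s ∈ S) (hx : x ∈ S) (hy : y ∈ S) (hsy : H.Adj s y) (hxy : ¬H.Adj x y) :
    H.Adj s x := by
  obtain ⟨P, Q, ⟨-, -, -, hP, hQ, hPQ⟩, rfl⟩ := hS
  rcases hs with hs | hs <;> rcases hx with hx | hx <;> rcases hy with hy | hy
  exacts [absurd hsy (hP s hs y hy), absurd (hPQ x hx y hy) hxy, absurd hsy (hP s hs y hy),
    hPQ s hs x hx, (hPQ x hx s hs).symm, absurd hsy (hQ s hs y hy),
    absurd (hPQ y hy x hx).symm hxy, absurd hsy (hQ s hs y hy)]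

theorem IsCompleteBipartiteSet.exists_adj_adj_of_not_adj (hS : IsCompleteBipartiteSet H S)
    {x y : V} (hx : x ∈ S) (hy : y ∈ S) (hxy : ¬H.Adj x y) :
    ∃ z ∈ S, H.Adj z x ∧ H.Adj z y := by
  obtain ⟨P, Q, ⟨⟨p, hp⟩, ⟨q, hq⟩, -, -, -, hPQ⟩, rfl⟩ := hS
  rcases hx with hx | hx <;> rcases hy with hy | hy
  · exact ⟨q, Or.inr hq, (hPQ x hx q hq).symm, (hPQ y hy q hq).symm⟩
  · exact absurd (hPQ x hx y hy) hxy
  · exact absurd (hPQ y hy x hx).symm hxy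
  · exact ⟨p, Or.inl hp, hPQ p hp x hx, hPQ p hp y hy⟩

theorem IsBiclique.exists_mem_not_mem_of_ne (hA : IsBiclique H A)
    (hB : IsCompleteBipartiteSet H B) (hAB : A ≠ B) : ∃ u ∈ A, u ∉ B :=
  Set.not_subset.1 fun h => hAB (hA.2 B hB h)

end Bicliques

def IsOnlyCommonBiclique (H : SimpleGraph V) (A B C : Set V) : Prop :=
  ∀ D, IsBiclique H D → (D ∩ A).Nonempty → (D ∩ B).Nonempty → (D ∩ C).Nonempty → D = B

section OnlyCommonBiclique

variable {H : SimpleGraph V} {A B C : Set V}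

theorem IsOnlyCommonBiclique.symm (h : IsOnlyCommonBiclique H A B C) :
    IsOnlyCommonBiclique H C B A :=
  fun D hD hDC hDB hDA => h D hD hDA hDB hDC

theorem IsOnlyCommonBiclique.subset_of_mem (h : IsOnlyCommonBiclique H A B C) {z : V}
    (hz : z ∈ B ∩ C) (E : Set V) (hE : IsBiclique H E) (hzE : z ∈ E) (hEA : (E ∩ A).Nonempty) :
    E ⊆ B :=
  (h E hE hEA ⟨z, hzE, hz.1⟩ ⟨z, hzE, hz.2⟩).le

theorem IsBiclique.exists_mem_inter_adj_adj_not_adj [Finite V] (hA : IsBiclique H A)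
    {u x z : V} (hz : ∀ E, IsBiclique H E → z ∈ E → (E ∩ A).Nonempty → E ⊆ B)
    (hu : u ∈ A \ B) (hx : x ∈ A ∩ B) (hxz : H.Adj x z) :
    ∃ q ∈ A ∩ B, H.Adj u q ∧ H.Adj q x ∧ ¬H.Adj q z := by
  have not_adj_of_adj : ∀ {s}, H.Adj u s → ¬H.Adj s z := by
    intro s hus hsz
    obtain ⟨E, hE, huE, hzE⟩ := exists_isBiclique_mem_mem_of_adj_of_adj hus hsz
    exact hu.2 (hz E hE hzE ⟨u, huE, hu.1⟩ huE)
  obtain ⟨q, hqA, hqu, hqx⟩ :=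
    hA.1.exists_adj_adj_of_not_adj hu.1 hx.1 fun hux => not_adj_of_adj hux hxz
  have hqz : ¬H.Adj q z := not_adj_of_adj hqu.symm
  obtain ⟨E, hE, hxE, hqE, hzE⟩ := exists_isBiclique_of_adj_of_adj hqx.symm hxz hqz
  exact ⟨q, ⟨hqA, hz E hE hzE ⟨x, hxE, hx.1⟩ hqE⟩, hqu.symm, hqx, hqz⟩

theorem IsOnlyCommonBiclique.not_adj [Finite V] (h : IsOnlyCommonBiclique H A B C)
    (hA : IsBiclique H A) (hB : IsBiclique H B) (hC : IsBiclique H C) (hAB : A ≠ B)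
    (hCB : C ≠ B) {x y : V} (hx : x ∈ A ∩ B) (hy : y ∈ C ∩ B) : ¬H.Adj x y := by
  intro hxy
  obtain ⟨u, huA, huB⟩ := hA.exists_mem_not_mem_of_ne hB.1 hAB
  obtain ⟨w, hwC, hwB⟩ := hC.exists_mem_not_mem_of_ne hB.1 hCB
  obtain ⟨q, hq, huq, hqx, -⟩ :=
    hA.exists_mem_inter_adj_adj_not_adj (h.subset_of_mem ⟨hy.2, hy.1⟩) ⟨huA, huB⟩ hx hxy
  obtain ⟨s, hs, -, -, hsx⟩ :=
    hC.exists_mem_inter_adj_adj_not_adj (h.symm.subset_of_mem ⟨hx.2, hx.1⟩) ⟨hwC, hwB⟩ hy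
      hxy.symm
  have hqs : H.Adj q s := hB.1.adj_of_adj_of_not_adj hq.2 hs.2 hx.2 hqx hsx
  obtain ⟨E, hE, huE, hsE⟩ := exists_isBiclique_mem_mem_of_adj_of_adj huq hqs
  exact huB (h.subset_of_mem ⟨hs.2, hs.1⟩ E hE hsE ⟨u, huE, huA⟩ huE)

theorem IsOnlyCommonBiclique.exists_isBiclique_mem_ne_ne [Finite V]
    (h : IsOnlyCommonBiclique H A B C) (hA : IsBiclique H A) (hB : IsBiclique H B)
    (hC : IsBiclique H C) (hAB : A ≠ B) (hCB : C ≠ B) {x₁ x₂ y : V} (hx₁ : x₁ ∈ A ∩ B)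
    (hx₂ : x₂ ∈ C ∩ B) (hy : y ∈ B) (hyx₁ : H.Adj y x₁) (hyx₂ : H.Adj y x₂) :
    ∃ D, IsBiclique H D ∧ y ∈ D ∧ (D ∩ A).Nonempty ∧ D ≠ A ∧ D ≠ B := by
  have hyA : y ∉ A := fun hyA => h.not_adj hA hB hC hAB hCB ⟨hyA, hy⟩ hx₂ hyx₂
  by_contra! hno
  have hz : ∀ E, IsBiclique H E → y ∈ E → (E ∩ A).Nonempty → E ⊆ B := fun E hE hyE hEA =>
    (hno E hE hyE hEA fun hEA => hyA (hEA ▸ hyE)).le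
  obtain ⟨u, huA, huB⟩ := hA.exists_mem_not_mem_of_ne hB.1 hAB
  obtain ⟨q, hq, -, -, hqy⟩ := hA.exists_mem_inter_adj_adj_not_adj hz ⟨huA, huB⟩ hx₁ hyx₁.symm
  have hqx₂ : H.Adj q x₂ := (hB.1.adj_of_adj_of_not_adj hx₂.2 hq.2 hy hyx₂.symm hqy).symm
  exact h.not_adj hA hB hC hAB hCB hq hx₂ hqx₂

end OnlyCommonBiclique

section BicliqueGraph

variable {H : SimpleGraph V} {a b c : {S : Set V // IsBiclique H S}}

theorem kb_adj_iff {p q : {S : Set V // IsBiclique H S}} :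
    (KB H).Adj p q ↔ p.1 ≠ q.1 ∧ (p.1 ∩ q.1).Nonempty := by
  rw [KB, fromRel_adj, Set.inter_comm q.1, or_self, Ne, Ne, Subtype.ext_iff]

theorem exists_induce_iso_diamond_of_not_isOnlyCommonBiclique (hab : (KB H).Adj b a)
    (hbc : (KB H).Adj b c) (hac : ¬(KB H).Adj a c) (hne : a ≠ c)
    (h : ¬IsOnlyCommonBiclique H a.1 b.1 c.1) :
    ∃ S, {a, b, c} ⊆ S ∧ Nonempty (induce S (KB H) ≃g diamond) := by
  simp only [IsOnlyCommonBiclique, not_forall] at h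
  obtain ⟨D, hD, hDa, hDb, hDc, hD_ne_b⟩ := h
  have hD_ne_a : D ≠ a.1 := by
    rintro rfl
    exact hac (kb_adj_iff.2 ⟨Subtype.coe_injective.ne hne, hDc⟩)
  have hD_ne_c : D ≠ c.1 := by
    rintro rfl
    exact hac (kb_adj_iff.2 ⟨Subtype.coe_injective.ne hne.symm, hDa⟩).symm
  let d : {S : Set V // IsBiclique H S} := ⟨D, hD⟩
  refine ⟨Set.range ![a, c, b, d], by simp [Set.insert_subset_iff],
    exists_induce_iso_diamond hne hac hab.symm ?_ hbc.symm ?_ ?_⟩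
  exacts [(kb_adj_iff.2 ⟨hD_ne_a, hDa⟩).symm, (kb_adj_iff.2 ⟨hD_ne_c, hDc⟩).symm,
    (kb_adj_iff.2 ⟨hD_ne_b, hDb⟩).symm]

theorem exists_induce_iso_gem_of_isOnlyCommonBiclique [Finite V] (hab : (KB H).Adj b a)
    (hbc : (KB H).Adj b c) (hac : ¬(KB H).Adj a c) (h : IsOnlyCommonBiclique H a.1 b.1 c.1) :
    ∃ S, {a, b, c} ⊆ S ∧ Nonempty (induce S (KB H) ≃g gem) := by
  obtain ⟨hAB, x₁, hx₁⟩ := kb_adj_iff.1 hab.symm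
  obtain ⟨hCB, x₂, hx₂⟩ := kb_adj_iff.1 hbc.symm
  obtain ⟨y, hy, hyx₁, hyx₂⟩ :=
    b.2.1.exists_adj_adj_of_not_adj hx₁.2 hx₂.2 (h.not_adj a.2 b.2 c.2 hAB hCB hx₁ hx₂)
  obtain ⟨D₂, hD₂, hyD₂, hD₂a, hD₂_ne_a, hD₂_ne_b⟩ :=
    h.exists_isBiclique_mem_ne_ne a.2 b.2 c.2 hAB hCB hx₁ hx₂ hy hyx₁ hyx₂
  obtain ⟨D₁, hD₁, hyD₁, hD₁c, hD₁_ne_c, hD₁_ne_b⟩ :=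
    h.symm.exists_isBiclique_mem_ne_ne c.2 b.2 a.2 hCB hAB hx₂ hx₁ hy hyx₂ hyx₁
  have hD₁a : ¬(D₁ ∩ a.1).Nonempty := fun hD₁a => hD₁_ne_b (h D₁ hD₁ hD₁a ⟨y, hyD₁, hy⟩ hD₁c)
  have hD₂c : ¬(D₂ ∩ c.1).Nonempty := fun hD₂c => hD₂_ne_b (h D₂ hD₂ hD₂a ⟨y, hyD₂, hy⟩ hD₂c)
  have hD₂_ne_D₁ : D₂ ≠ D₁ := by
    rintro rfl
    exact hD₁a hD₂a
  let d₁ : {S : Set V // IsBiclique H S} := ⟨D₁, hD₁⟩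
  let d₂ : {S : Set V // IsBiclique H S} := ⟨D₂, hD₂⟩
  refine ⟨Set.range ![a, d₂, d₁, c, b], by simp [Set.insert_subset_iff],
    exists_induce_iso_gem ?_ ?_ ?_ ?_ hac ?_ hab.symm ?_ ?_ hbc.symm⟩
  exacts [(kb_adj_iff.2 ⟨hD₂_ne_a, hD₂a⟩).symm, kb_adj_iff.2 ⟨hD₂_ne_D₁, y, hyD₂, hyD₁⟩,
    kb_adj_iff.2 ⟨hD₁_ne_c, hD₁c⟩, fun had₁ => hD₁a (kb_adj_iff.1 had₁.symm).2,
    fun hd₂c => hD₂c (kb_adj_iff.1 hd₂c).2, kb_adj_iff.2 ⟨hD₂_ne_b, y, hyD₂, hy⟩,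
    kb_adj_iff.2 ⟨hD₁_ne_b, y, hyD₁, hy⟩]

end BicliqueGraph

/-- Every induced `P_3` of a biclique graph is contained in an induced diamond or gem. -/
theorem stmt_0 {V : Type} [Fintype V] (H : SimpleGraph V)
    (a b c : {S : Set V // IsBiclique H S})
    (hab : (KB H).Adj b a) (hbc : (KB H).Adj b c)
    (hac : ¬(KB H).Adj a c) (hne : a ≠ c) :
    ∃ S : Set {S : Set V // IsBiclique H S}, {a, b, c} ⊆ S ∧
      (Nonempty (SimpleGraph.induce S (KB H) ≃g diamond) ∨
        Nonempty (SimpleGraph.induce S (KB H) ≃g gem)) := by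
  by_cases h : IsOnlyCommonBiclique H a.1 b.1 c.1
  · obtain ⟨S, hS, hgem⟩ := exists_induce_iso_gem_of_isOnlyCommonBiclique hab hbc hac h
    exact ⟨S, hS, Or.inr hgem⟩
  · obtain ⟨S, hS, hdiamond⟩ :=
      exists_induce_iso_diamond_of_not_isOnlyCommonBiclique hab hbc hac hne h
    exact ⟨S, hS, Or.inl hdiamond⟩
end

section
/- For every k ≥ 7 and every vertex q of KB(C_k), the graph KB(C_k) − {q} obtained by deleting q is not a biclique graph; that is, there is no finite simple graph H' such that KB(H') is isomorphic to KB(C_k) − {q}. -/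
open SimpleGraph

variable {V : Type}

/-- The cycle `C_k` on vertex set `ZMod k`, `i` adjacent to `j` iff `i - j ≡ ±1 (mod k)`. -/
def cycle (k : ℕ) : SimpleGraph (ZMod k) :=
  SimpleGraph.fromRel fun i j => i = j + 1

/-!
The bicliques of `C_k` (`k ≥ 5`) are exactly the closed neighbourhoods `N[i]`, so two of them
meet iff their centres are at cyclic distance at most `2`. Deleting `q = N[i]` therefore leaves
an induced path `N[i-2] - N[i-1] - N[i+1]` whose edge `N[i-1] N[i+1]` lies in no triangle.
This never happens in a biclique graph `KB(H)`: if the bicliques `B`, `C` meet and no third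
biclique meets both, then every neighbour of a vertex of `B \ C` lies in `C` (otherwise one builds
a complete bipartite set extending to a third biclique meeting both), so no biclique `A`
meeting `B` can avoid `C`.
-/

lemma IsCBP.symm {H : SimpleGraph V} {B1 B2 : Set V} (h : IsCBP H B1 B2) : IsCBP H B2 B1 :=
  ⟨h.2.1, h.1, h.2.2.1.symm, h.2.2.2.2.1, h.2.2.2.1,
    fun a ha b hb => (h.2.2.2.2.2 b hb a ha).symm⟩

lemma IsCBP.insert_left {H : SimpleGraph V} {P Q : Set V} {x : V} (h : IsCBP H P Q) (hxQ : x ∉ Q)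
    (hxP : ∀ v ∈ P, ¬H.Adj x v) (hxQ' : ∀ v ∈ Q, H.Adj x v) : IsCBP H (insert x P) Q := by
  obtain ⟨-, hQ, hPQ, hPind, hQind, hcross⟩ := h
  refine ⟨Set.insert_nonempty x P, hQ, Set.disjoint_insert_left.2 ⟨hxQ, hPQ⟩, ?_, hQind, ?_⟩
  · rintro u (rfl | hu) v (rfl | hv) huv
    · exact H.irrefl huv
    · exact hxP v hv huv
    · exact hxP u hu huv.symm
    · exact hPind u hu v hv huv
  · rintro u (rfl | hu) v hv
    exacts [hxQ' v hv, hcross u hu v hv]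

lemma IsCBP.subset_right {H : SimpleGraph V} {P Q R : Set V} (h : IsCBP H P Q) (hR : R.Nonempty)
    (hRQ : R ⊆ Q) : IsCBP H P R :=
  ⟨h.1, hR, h.2.2.1.mono_right hRQ, h.2.2.2.1, fun a ha b hb => h.2.2.2.2.1 a (hRQ ha) b (hRQ hb),
    fun a ha b hb => h.2.2.2.2.2 a ha b (hRQ hb)⟩

lemma isCBP_singleton_pair {H : SimpleGraph V} {x a z : V} (hxa : H.Adj x a) (hxz : H.Adj x z)
    (haz : ¬H.Adj a z) : IsCBP H {x} {a, z} := by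
  refine ⟨Set.singleton_nonempty x, Set.insert_nonempty a {z}, ?_, ?_, ?_, ?_⟩
  · simp [hxa.ne, hxz.ne]
  · rintro u rfl v rfl
    exact H.irrefl
  · rintro u (rfl | rfl) v (rfl | rfl)
    exacts [H.irrefl, haz, fun h => haz h.symm, H.irrefl]
  · rintro u rfl v (rfl | rfl)
    exacts [hxa, hxz]

lemma IsCompleteBipartiteSet.exists_parts_mem_left {H : SimpleGraph V} {S : Set V} {y : V}
    (hS : IsCompleteBipartiteSet H S) (hy : y ∈ S) :
    ∃ P Q, IsCBP H P Q ∧ P ∪ Q = S ∧ y ∈ P := by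
  obtain ⟨P, Q, h, rfl⟩ := hS
  rcases hy with hy | hy
  exacts [⟨P, Q, h, rfl, hy⟩, ⟨Q, P, h.symm, Set.union_comm Q P, hy⟩]

lemma IsCompleteBipartiteSet.exists_adj {H : SimpleGraph V} {S : Set V} {x : V}
    (hS : IsCompleteBipartiteSet H S) (hx : x ∈ S) : ∃ a ∈ S, H.Adj x a := by
  obtain ⟨P, Q, h, rfl, hxP⟩ := hS.exists_parts_mem_left hx
  obtain ⟨a, ha⟩ := h.2.1
  exact ⟨a, Or.inr ha, h.2.2.2.2.2 x hxP a ha⟩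

lemma IsCBP.exists_biclique_superset [Finite V] {H : SimpleGraph V} {P Q : Set V}
    (h : IsCBP H P Q) : ∃ D, IsBiclique H D ∧ P ∪ Q ⊆ D := by
  obtain ⟨D, hPQD, hD⟩ := (Set.toFinite {T | IsCompleteBipartiteSet H T}).exists_le_maximal
    (show IsCompleteBipartiteSet H (P ∪ Q) from ⟨P, Q, h, rfl⟩)
  exact ⟨D, ⟨hD.1, fun T hT hDT => hDT.antisymm (hD.2 hT hDT)⟩, hPQD⟩

lemma exists_biclique_of_adj [Finite V] {H : SimpleGraph V} {u v : V} (h : H.Adj u v) :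
    ∃ D, IsBiclique H D ∧ u ∈ D ∧ v ∈ D := by
  have hcbp : IsCBP H {u} {v} := by
    refine ⟨Set.singleton_nonempty u, Set.singleton_nonempty v, by simpa using h.ne, ?_, ?_, ?_⟩
    · rintro a rfl b rfl; exact H.irrefl
    · rintro a rfl b rfl; exact H.irrefl
    · rintro a rfl b rfl; exact h
  obtain ⟨D, hD, hsub⟩ := hcbp.exists_biclique_superset
  exact ⟨D, hD, hsub (Or.inl rfl), hsub (Or.inr rfl)⟩

lemma IsBiclique.mem_of_isCBP {H : SimpleGraph V} {P Q : Set V} {x : V}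
    (hC : IsBiclique H (P ∪ Q)) (h : IsCBP H P Q) (hxP : ∀ v ∈ P, ¬H.Adj x v)
    (hxQ : ∀ v ∈ Q, H.Adj x v) : x ∈ P ∪ Q := by
  by_contra hx
  have hext : IsCompleteBipartiteSet H (insert x P ∪ Q) :=
    ⟨_, Q, h.insert_left (fun hQ => hx (Or.inr hQ)) hxP hxQ, rfl⟩
  apply hx
  rw [hC.2 _ hext (Set.union_subset_union_left Q (Set.subset_insert x P))]
  exact Or.inl (Set.mem_insert x P)

/-- For distinct bicliques `B`, `C`: they have no common neighbour in `KB H`. -/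
def OnlyBicliquesMeetingBoth (H : SimpleGraph V) (B C : Set V) : Prop :=
  ∀ D, IsBiclique H D → (D ∩ B).Nonempty → (D ∩ C).Nonempty → D = B ∨ D = C

namespace OnlyBicliquesMeetingBoth

variable [Finite V] {H : SimpleGraph V}

lemma mem_or_mem_of_adj {B C : Set V} {u v : V} (h : OnlyBicliquesMeetingBoth H B C)
    (huv : H.Adj u v) (hu : u ∈ B) (hv : v ∈ C) : v ∈ B ∨ u ∈ C := by
  obtain ⟨D, hD, huD, hvD⟩ := exists_biclique_of_adj huv
  rcases h D hD ⟨u, huD, hu⟩ ⟨v, hvD, hv⟩ with rfl | rfl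
  exacts [Or.inl hvD, Or.inr huD]

/-- A biclique through a vertex of `B ∩ C` lies in `B` or `C`, so a vertex outside `B ∪ C` is at
distance at least `3` from `B ∩ C`. -/
lemma not_adj_of_adj {B C : Set V} {x a z : V} (h : OnlyBicliquesMeetingBoth H B C)
    (hxa : H.Adj x a) (haB : a ∉ B) (haC : a ∉ C) (hzB : z ∈ B) (hzC : z ∈ C) : ¬H.Adj x z := by
  have hsep : ∀ D, IsBiclique H D → a ∈ D → z ∉ D := by
    intro D hD haD hzD
    rcases h D hD ⟨z, hzD, hzB⟩ ⟨z, hzD, hzC⟩ with rfl | rfl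
    exacts [haB haD, haC haD]
  have haz : ¬H.Adj a z := fun haz =>
    let ⟨D, hD, haD, hzD⟩ := exists_biclique_of_adj haz
    hsep D hD haD hzD
  intro hxz
  obtain ⟨D, hD, hsub⟩ := (isCBP_singleton_pair hxa hxz haz).exists_biclique_superset
  exact hsep D hD (hsub (Or.inr (Or.inl rfl))) (hsub (Or.inr (Or.inr rfl)))

lemma subset_of_mem_left {B1 B2 C1 C2 : Set V} {x y : V}
    (h : OnlyBicliquesMeetingBoth H (B1 ∪ B2) (C1 ∪ C2)) (hB : IsCBP H B1 B2)
    (hC : IsCBP H C1 C2) (hCmax : IsBiclique H (C1 ∪ C2)) (hyB : y ∈ B1) (hyC : y ∈ C1)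
    (hxB : x ∈ B1) (hxC : x ∉ C1 ∪ C2) : B2 ⊆ C1 ∪ C2 := by
  have ⟨_, _, _, hB1ind, _, hBcross⟩ := hB
  have ⟨_, _, _, hC1ind, hC2ind, hCcross⟩ := hC
  have hxC1 : ∀ v ∈ C1, ¬H.Adj x v := by
    intro v hv hxv
    rcases h.mem_or_mem_of_adj hxv (Or.inl hxB) (Or.inl hv) with (hvB1 | hvB2) | hxC'
    · exact hB1ind x hxB v hvB1 hxv
    · exact hC1ind y hyC v hv (hBcross y hyB v hvB2)
    · exact hxC hxC'
  obtain ⟨c, hcC2, hxc⟩ : ∃ c ∈ C2, ¬H.Adj x c := by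
    by_contra! hall
    exact hxC (hCmax.mem_of_isCBP hC hxC1 hall)
  have hcB : c ∉ B1 ∪ B2 := by
    rintro (hc | hc)
    exacts [hB1ind y hyB c hc (hCcross y hyC c hcC2), hxc (hBcross x hxB c hc)]
  -- `insert c B2` and `B1 ∩ C1` extend to a biclique meeting `B` and `C` at `c ∉ B`: it is `C`
  have hcB2 : ∀ v ∈ B2, ¬H.Adj c v := by
    intro v hv hcv
    rcases h.mem_or_mem_of_adj hcv.symm (Or.inr hv) (Or.inr hcC2) with hcB' | (hvC1 | hvC2)
    · exact hcB hcB'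
    · exact hC1ind y hyC v hvC1 (hBcross y hyB v hv)
    · exact hC2ind c hcC2 v hvC2 hcv
  have hD : IsCBP H (insert c B2) (B1 ∩ C1) :=
    (hB.symm.subset_right (R := B1 ∩ C1) ⟨y, hyB, hyC⟩ Set.inter_subset_left).insert_left
      (fun hc => hcB (Or.inl hc.1)) hcB2 fun v hv => (hCcross v hv.2 c hcC2).symm
  obtain ⟨D, hD, hsub⟩ := hD.exists_biclique_superset
  rcases h D hD ⟨y, hsub (Or.inr ⟨hyB, hyC⟩), Or.inl hyB⟩
    ⟨c, hsub (Or.inl (Set.mem_insert c B2)), Or.inr hcC2⟩ with rfl | rfl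
  · exact absurd (hsub (Or.inl (Set.mem_insert c B2))) hcB
  · exact fun b hb => hsub (Or.inl (Set.mem_insert_of_mem c hb))

lemma mem_of_adj_of_parts {B1 B2 C1 C2 : Set V} {x y a : V}
    (h : OnlyBicliquesMeetingBoth H (B1 ∪ B2) (C1 ∪ C2)) (hB : IsCBP H B1 B2)
    (hC : IsCBP H C1 C2) (hCmax : IsBiclique H (C1 ∪ C2)) (hyB : y ∈ B1) (hyC : y ∈ C1)
    (hxB : x ∈ B1 ∪ B2) (hxC : x ∉ C1 ∪ C2) (hxa : H.Adj x a) : a ∈ C1 ∪ C2 := by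
  by_contra haC
  rcases hxB with hxB1 | hxB2
  · have hB2C := h.subset_of_mem_left hB hC hCmax hyB hyC hxB1 hxC
    obtain ⟨b, hb⟩ := hB.2.1
    have haB : a ∉ B1 ∪ B2 := by
      rintro (ha | ha)
      exacts [hB.2.2.2.1 x hxB1 a ha hxa, haC (hB2C ha)]
    exact h.not_adj_of_adj hxa haB haC (Or.inr hb) (hB2C hb) (hB.2.2.2.2.2 x hxB1 b hb)
  · by_cases haB : a ∈ B1 ∪ B2
    · have haB1 : a ∈ B1 := haB.resolve_right fun ha => hB.2.2.2.2.1 x hxB2 a ha hxa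
      exact hxC (h.subset_of_mem_left hB hC hCmax hyB hyC haB1 haC hxB2)
    · exact h.not_adj_of_adj hxa haB haC (Or.inl hyB) (Or.inl hyC)
        (hB.2.2.2.2.2 y hyB x hxB2).symm

lemma mem_of_adj {B C : Set V} {x y a : V} (h : OnlyBicliquesMeetingBoth H B C)
    (hB : IsBiclique H B) (hC : IsBiclique H C) (hyB : y ∈ B) (hyC : y ∈ C) (hxB : x ∈ B)
    (hxC : x ∉ C) (hxa : H.Adj x a) : a ∈ C := by
  obtain ⟨B1, B2, hB', rfl, hyB1⟩ := hB.1.exists_parts_mem_left hyB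
  obtain ⟨C1, C2, hC', rfl, hyC1⟩ := hC.1.exists_parts_mem_left hyC
  exact h.mem_of_adj_of_parts hB' hC' hC hyB1 hyC1 hxB hxC hxa

end OnlyBicliquesMeetingBoth

lemma KB_adj_iff {H : SimpleGraph V} {A B : {S // IsBiclique H S}} :
    (KB H).Adj A B ↔ A ≠ B ∧ (A.1 ∩ B.1).Nonempty := by
  rw [KB, SimpleGraph.fromRel_adj, Set.inter_comm B.1, or_self]

/-- An edge of a biclique graph lying in no triangle is a connected component. -/
theorem KB.eq_of_adj_of_adj [Finite V] {H : SimpleGraph V} {A B C : {S // IsBiclique H S}}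
    (hBC : (KB H).Adj B C) (hBA : (KB H).Adj B A)
    (hno : ∀ D, (KB H).Adj B D → ¬(KB H).Adj C D) : A = C := by
  by_contra hAC
  have hmeet : OnlyBicliquesMeetingBoth H B.1 C.1 := by
    intro D hD hDB hDC
    by_contra! hne
    refine hno ⟨D, hD⟩ (KB_adj_iff.2 ⟨fun h => hne.1 (congrArg Subtype.val h).symm, ?_⟩)
      (KB_adj_iff.2 ⟨fun h => hne.2 (congrArg Subtype.val h).symm, ?_⟩)
    all_goals rwa [Set.inter_comm]
  have hAC' : ∀ v ∈ A.1, v ∉ C.1 := fun v hvA hvC =>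
    hno A hBA (KB_adj_iff.2 ⟨fun h => hAC h.symm, v, hvC, hvA⟩)
  obtain ⟨-, x, hxB, hxA⟩ := KB_adj_iff.1 hBA
  obtain ⟨a, haA, hxa⟩ := A.2.1.exists_adj hxA
  obtain ⟨-, y, hyB, hyC⟩ := KB_adj_iff.1 hBC
  exact hAC' a haA (hmeet.mem_of_adj B.2 C.2 hyB hyC hxB (hAC' x hxA) hxa)

theorem not_nonempty_iso_KB {U W : Type} [Finite W] {G : SimpleGraph U} {a b c : U}
    (hbc : G.Adj b c) (hba : G.Adj b a) (hac : a ≠ c) (hno : ∀ d, G.Adj b d → ¬G.Adj c d)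
    (H : SimpleGraph W) : ¬Nonempty (KB H ≃g G) := by
  rintro ⟨e⟩
  refine hac (e.symm.injective (KB.eq_of_adj_of_adj (e.symm.map_adj_iff.2 hbc)
    (e.symm.map_adj_iff.2 hba) fun D hbD hcD => hno (e D) ?_ ?_))
  · simpa using e.map_adj_iff.2 hbD
  · simpa using e.map_adj_iff.2 hcD

section Cycle

variable {k : ℕ}

lemma eq_of_add_intCast_eq {i : ZMod k} {a b : ℤ} (hab : (a - b).natAbs < k)
    (h : i + a = i + b) : a = b := by
  have hdvd := (ZMod.intCast_eq_intCast_iff_dvd_sub a b k).1 (add_left_cancel h)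
  have := Int.eq_zero_of_dvd_of_natAbs_lt_natAbs hdvd (by omega)
  omega

lemma cycle_adj_iff (hk : 2 ≤ k) {u v : ZMod k} :
    (cycle k).Adj u v ↔ ∃ e : ℤ, e.natAbs = 1 ∧ v = u + e := by
  rw [cycle, SimpleGraph.fromRel_adj]
  constructor
  · rintro ⟨-, h | h⟩
    · exact ⟨-1, rfl, by rw [h]; push_cast; ring⟩
    · exact ⟨1, rfl, by rw [h]; push_cast; ring⟩
  · rintro ⟨e, he, rfl⟩
    refine ⟨fun h => ?_, ?_⟩
    · have := eq_of_add_intCast_eq (i := u) (a := 0) (b := e) (by omega) (by simpa using h)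
      omega
    · obtain rfl | rfl : e = 1 ∨ e = -1 := by omega
      · right; push_cast; ring
      · left; push_cast; ring

def closedNbhd (i : ZMod k) : Set (ZMod k) := insert i ((cycle k).neighborSet i)

lemma mem_closedNbhd_iff (hk : 2 ≤ k) {i u : ZMod k} :
    u ∈ closedNbhd i ↔ ∃ d : ℤ, d.natAbs ≤ 1 ∧ u = i + d := by
  rw [closedNbhd, Set.mem_insert_iff, SimpleGraph.mem_neighborSet, cycle_adj_iff hk]
  constructor
  · rintro (rfl | ⟨e, he, rfl⟩)
    exacts [⟨0, by norm_num, by simp⟩, ⟨e, he.le, rfl⟩]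
  · rintro ⟨d, hd, rfl⟩
    obtain rfl | hd : d = 0 ∨ d.natAbs = 1 := by omega
    exacts [Or.inl (by simp), Or.inr ⟨d, hd, rfl⟩]

lemma cycle_not_adj_of_adj_of_adj (hk : 4 ≤ k) {i u v : ZMod k} (hu : (cycle k).Adj i u)
    (hv : (cycle k).Adj i v) : ¬(cycle k).Adj u v := by
  rw [cycle_adj_iff (by omega)] at hu hv ⊢
  rintro ⟨f, hf, rfl⟩
  obtain ⟨e, he, rfl⟩ := hu
  obtain ⟨e', he', hv⟩ := hv
  have := eq_of_add_intCast_eq (i := i) (a := e + f) (b := e') (by omega)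
    (by rw [← hv]; push_cast; ring)
  omega

lemma cycle_eq_of_adj_of_adj (hk : 5 ≤ k) {a a' b b' : ZMod k} (hbb' : b ≠ b')
    (hab : (cycle k).Adj a b) (hab' : (cycle k).Adj a b') (ha'b : (cycle k).Adj a' b)
    (ha'b' : (cycle k).Adj a' b') : a = a' := by
  rw [cycle_adj_iff (by omega)] at hab hab' ha'b ha'b'
  obtain ⟨e, he, rfl⟩ := hab
  obtain ⟨e', he', rfl⟩ := hab'
  obtain ⟨f, hf, hbf⟩ := ha'b
  obtain ⟨f', hf', hbf'⟩ := ha'b'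
  have ha' : a' = a + ((e - f : ℤ) : ZMod k) := by push_cast; linear_combination -hbf
  have hee' : e ≠ e' := by rintro rfl; exact hbb' rfl
  have := eq_of_add_intCast_eq (i := a) (a := e') (b := e - f + f') (by omega)
    (by rw [hbf', ha']; push_cast; ring)
  have hef : e = f := by omega
  rw [ha', hef, sub_self, Int.cast_zero, add_zero]

lemma eq_of_closedNbhd_subset (hk : 4 ≤ k) {i j : ZMod k} (h : closedNbhd i ⊆ closedNbhd j) :
    i = j := by
  have hmem : ∀ d : ℤ, d.natAbs ≤ 1 → ∃ d' : ℤ, d'.natAbs ≤ 1 ∧ i + d = j + d' := fun d hd =>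
    (mem_closedNbhd_iff (by omega)).1 (h ((mem_closedNbhd_iff (by omega)).2 ⟨d, hd, rfl⟩))
  obtain ⟨d, hd, hi⟩ := hmem 0 (by norm_num)
  obtain ⟨d₁, hd₁, h₁⟩ := hmem 1 (by norm_num)
  obtain ⟨d₂, hd₂, h₂⟩ := hmem (-1) (by norm_num)
  rw [Int.cast_zero, add_zero] at hi
  have := eq_of_add_intCast_eq (i := j) (a := d + 1) (b := d₁) (by omega)
    (by rw [← h₁, hi]; push_cast; ring)
  have := eq_of_add_intCast_eq (i := j) (a := d - 1) (b := d₂) (by omega)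
    (by rw [← h₂, hi]; push_cast; ring)
  obtain rfl : d = 0 := by omega
  simpa using hi

lemma isCBP_neighborSet (hk : 4 ≤ k) (i : ZMod k) :
    IsCBP (cycle k) ((cycle k).neighborSet i) {i} := by
  refine ⟨⟨i + 1, (cycle_adj_iff (by omega)).2 ⟨1, rfl, by push_cast; rfl⟩⟩,
    Set.singleton_nonempty i, Set.disjoint_singleton_right.2 fun h => (cycle k).irrefl h,
    fun u hu v hv => cycle_not_adj_of_adj_of_adj hk hu hv, ?_, fun u hu v hv => ?_⟩
  · rintro u rfl v rfl
    exact (cycle k).irrefl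
  · rw [Set.mem_singleton_iff.1 hv]
    exact hu.symm

lemma IsCBP.exists_subset_closedNbhd (hk : 5 ≤ k) {B1 B2 : Set (ZMod k)}
    (h : IsCBP (cycle k) B1 B2) : ∃ i, B1 ∪ B2 ⊆ closedNbhd i := by
  obtain ⟨⟨a, ha⟩, ⟨b, hb⟩, -, -, -, hcross⟩ := h
  by_cases hB2 : ∀ b' ∈ B2, b' = b
  · exact ⟨b, Set.union_subset (fun u hu => Or.inr (hcross u hu b hb).symm)
      fun u hu => Or.inl (hB2 u hu)⟩
  · push Not at hB2
    obtain ⟨b', hb', hne⟩ := hB2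
    -- `C_k` has no `4`-cycle, so `a` is the only vertex of `B1`
    refine ⟨a, Set.union_subset (fun u hu => Or.inl ?_) fun u hu => Or.inr (hcross a ha u hu)⟩
    exact cycle_eq_of_adj_of_adj hk hne.symm (hcross u hu b hb) (hcross u hu b' hb')
      (hcross a ha b hb) (hcross a ha b' hb')

lemma isBiclique_closedNbhd (hk : 5 ≤ k) (i : ZMod k) :
    IsBiclique (cycle k) (closedNbhd i) := by
  refine ⟨⟨_, _, isCBP_neighborSet (by omega) i, Set.union_singleton⟩,
    fun T ⟨P, Q, hPQ, hT⟩ hsub => ?_⟩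
  obtain ⟨j, hj⟩ := hPQ.exists_subset_closedNbhd hk
  rw [hT] at hj
  obtain rfl := eq_of_closedNbhd_subset (by omega) (hsub.trans hj)
  exact hsub.antisymm hj

lemma IsBiclique.exists_eq_closedNbhd (hk : 5 ≤ k) {S : Set (ZMod k)}
    (hS : IsBiclique (cycle k) S) : ∃ i, S = closedNbhd i := by
  obtain ⟨⟨P, Q, hPQ, rfl⟩, hmax⟩ := hS
  obtain ⟨i, hi⟩ := hPQ.exists_subset_closedNbhd hk
  exact ⟨i, hmax _ (isBiclique_closedNbhd hk i).1 hi⟩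

lemma exists_eq_add_of_closedNbhd_inter (hk : 2 ≤ k) {i j : ZMod k}
    (h : (closedNbhd i ∩ closedNbhd j).Nonempty) : ∃ d : ℤ, d.natAbs ≤ 2 ∧ j = i + d := by
  obtain ⟨u, hui, huj⟩ := h
  obtain ⟨d, hd, rfl⟩ := (mem_closedNbhd_iff hk).1 hui
  obtain ⟨d', hd', h'⟩ := (mem_closedNbhd_iff hk).1 huj
  exact ⟨d - d', by omega, by rw [eq_sub_of_add_eq h'.symm]; push_cast; ring⟩

lemma closedNbhd_add_inj (hk : 4 ≤ k) (i : ZMod k) {a b : ℤ} (hab : (a - b).natAbs < k) :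
    closedNbhd (i + (a : ZMod k)) = closedNbhd (i + (b : ZMod k)) ↔ a = b :=
  ⟨fun h => eq_of_add_intCast_eq hab (eq_of_closedNbhd_subset hk h.le), fun h => by rw [h]⟩

lemma closedNbhd_add_inter_nonempty_iff (i : ZMod k) {a b : ℤ} (hab : (a - b).natAbs + 2 < k) :
    (closedNbhd (i + (a : ZMod k)) ∩ closedNbhd (i + (b : ZMod k))).Nonempty ↔
      (a - b).natAbs ≤ 2 := by
  constructor
  · intro h
    obtain ⟨d, hd, hdb⟩ := exists_eq_add_of_closedNbhd_inter (by omega) h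
    have := eq_of_add_intCast_eq (i := i) (a := b) (b := a + d) (by omega)
      (by rw [hdb]; push_cast; ring)
    omega
  · intro h
    refine ⟨i + (((a + b) / 2 : ℤ) : ZMod k),
      (mem_closedNbhd_iff (by omega)).2 ⟨(a + b) / 2 - a, by omega, ?_⟩,
      (mem_closedNbhd_iff (by omega)).2 ⟨(a + b) / 2 - b, by omega, ?_⟩⟩ <;> push_cast <;> ring

lemma KB_cycle_adj_iff (hk : 4 ≤ k) {i : ZMod k} {a b : ℤ} (hab : (a - b).natAbs + 2 < k)
    {A B : {S // IsBiclique (cycle k) S}} (hA : A.1 = closedNbhd (i + (a : ZMod k)))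
    (hB : B.1 = closedNbhd (i + (b : ZMod k))) :
    (KB (cycle k)).Adj A B ↔ a ≠ b ∧ (a - b).natAbs ≤ 2 := by
  rw [KB_adj_iff, Ne, Subtype.ext_iff, hA, hB, closedNbhd_add_inj hk i (by omega),
    closedNbhd_add_inter_nonempty_iff i hab]

lemma exists_offset_of_KB_cycle_adj (hk : 5 ≤ k) {i : ZMod k} {a : ℤ}
    {A D : {S // IsBiclique (cycle k) S}} (hA : A.1 = closedNbhd (i + (a : ZMod k)))
    (h : (KB (cycle k)).Adj A D) :
    ∃ e : ℤ, (e - a).natAbs ≤ 2 ∧ D.1 = closedNbhd (i + (e : ZMod k)) := by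
  obtain ⟨j, hj⟩ := D.2.exists_eq_closedNbhd hk
  have hmeet := (KB_adj_iff.1 h).2
  rw [hA, hj] at hmeet
  obtain ⟨d, hd, rfl⟩ := exists_eq_add_of_closedNbhd_inter (by omega) hmeet
  refine ⟨a + d, by omega, ?_⟩
  rw [hj]
  push_cast
  ring_nf

/-- Witnesses: `a = N[i-2]`, `b = N[i-1]`, `c = N[i+1]`, where `q = N[i]`. -/
theorem exists_KB_cycle_path (hk : 7 ≤ k) (q : {S // IsBiclique (cycle k) S}) :
    ∃ a b c : {S // IsBiclique (cycle k) S}, a ≠ q ∧ b ≠ q ∧ c ≠ q ∧ a ≠ c ∧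
      (KB (cycle k)).Adj b c ∧ (KB (cycle k)).Adj b a ∧
      ∀ d, d ≠ q → (KB (cycle k)).Adj b d → ¬(KB (cycle k)).Adj c d := by
  obtain ⟨i, hi⟩ := q.2.exists_eq_closedNbhd (by omega)
  let N (d : ℤ) : {S // IsBiclique (cycle k) S} :=
    ⟨closedNbhd (i + (d : ZMod k)), isBiclique_closedNbhd (by omega) _⟩
  have hq : q = N 0 := Subtype.ext (by simp [N, hi])
  subst hq
  have hN : ∀ a b : ℤ, (a - b).natAbs < k → N a = N b → a = b := fun a b hab h =>
    (closedNbhd_add_inj (by omega) i hab).1 (congrArg Subtype.val h)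
  refine ⟨N (-2), N (-1), N 1, ?_, ?_, ?_, ?_, ?_, ?_, ?_⟩
  iterate 4 exact fun h => absurd (hN _ _ (by omega) h) (by omega)
  iterate 2 exact (KB_cycle_adj_iff (by omega) (by omega) rfl rfl).2 (by omega)
  intro d hdq hbd hcd
  obtain ⟨e, he, hd⟩ := exists_offset_of_KB_cycle_adj (by omega) (A := N (-1)) rfl hbd
  rw [KB_cycle_adj_iff (by omega) (by omega) rfl hd] at hbd hcd
  exact hdq (Subtype.ext (hd.trans
    ((closedNbhd_add_inj (by omega) i (by omega)).2 (by omega))))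

end Cycle

/-- For `k ≥ 7`, deleting any vertex from `KB(C_k)` never yields a biclique graph. -/
theorem stmt_1 (k : ℕ) (hk : 7 ≤ k)
    (q : {S : Set (ZMod k) // IsBiclique (cycle k) S})
    (W : Type) [Fintype W] (H' : SimpleGraph W) :
    ¬Nonempty (KB H' ≃g SimpleGraph.induce {p | p ≠ q} (KB (cycle k))) := by
  obtain ⟨a, b, c, haq, hbq, hcq, hac, hbc, hba, hno⟩ := exists_KB_cycle_path hk q
  exact not_nonempty_iso_KB (G := (KB (cycle k)).induce {p | p ≠ q})
    (a := ⟨a, haq⟩) (b := ⟨b, hbq⟩) (c := ⟨c, hcq⟩) hbc hba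
    (fun h => hac (congrArg Subtype.val h)) (fun d => hno d d.2) H'
end

section
/- Let H be a finite connected simple graph with no false twins and at least 7 vertices, and let B be a biclique of H with parts B_1 and B_2 such that either some part has at least 3 vertices (i.e., K_{1,3} ⊆ B) or both parts have exactly 2 vertices (i.e., B induces a C_4). Then at least 3 bicliques of H distinct from B have nonempty intersection with B; equivalently, the vertex of KB(H) corresponding to B has degree at least 3. -/
open SimpleGraph

variable {V : Type}

/-!
Suppose `B` meets at most two other bicliques. A complete bipartite set containing a vertex of
`B` and a vertex outside `B` extends to a biclique other than `B` that meets `B`, so it lies in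
one of at most two bicliques `X`, `Y`. Moreover two vertices on the same side of `B` have the
same neighbours inside `B`, so by false-twin-freeness their external neighbourhoods
`E(x) = N(x) \ B` differ. For three vertices on one side (a `K_{1,3}`), or the two pairs of a
`C_4`, we compare these external neighbourhoods under inclusion. In each configuration, placing
edges and cherries `K_{1,2}` into `X` or `Y` either gives a contradiction outright or pins down
every external neighbourhood, so that `B` together with at most two further vertices is closed
under adjacency; by connectivity this is all of `H`, against `|V| ≥ 7`.
-/

namespace IsCompleteBipartiteSet

variable {H : SimpleGraph V} {T : Set V} {a b c z : V}

theorem exists_side (hT : IsCompleteBipartiteSet H T) :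
    ∃ P : Set V, ∀ x ∈ T, ∀ y ∈ T, H.Adj x y ↔ (x ∈ P ↔ y ∉ P) := by
  obtain ⟨P, Q, ⟨-, -, hPQ, hP, hQ, hadj⟩, rfl⟩ := hT
  refine ⟨P, fun x hx y hy => ?_⟩
  have hQP : ∀ z ∈ Q, z ∉ P := fun z hz hzP => Set.disjoint_left.1 hPQ hzP hz
  rcases hx with hx | hx <;> rcases hy with hy | hy
  · simp [hx, hy, hP x hx y hy]
  · simp [hx, hQP y hy, hadj x hx y hy]
  · simp [hy, hQP x hx, (hadj y hy x hx).symm]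
  · simp [hQP x hx, hQP y hy, hQ x hx y hy]

theorem adj_of_not_adj_of_adj (hT : IsCompleteBipartiteSet H T) (ha : a ∈ T) (hb : b ∈ T)
    (hc : c ∈ T) (hab : ¬H.Adj a b) (hac : H.Adj a c) : H.Adj b c := by
  obtain ⟨P, hP⟩ := hT.exists_side
  rw [hP a ha b hb] at hab
  rw [hP a ha c hc] at hac
  rw [hP b hb c hc]
  tauto

theorem not_adj_of_adj_of_adj (hT : IsCompleteBipartiteSet H T) (ha : a ∈ T) (hb : b ∈ T)
    (hc : c ∈ T) (hab : H.Adj a b) (hbc : H.Adj b c) : ¬H.Adj a c := by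
  obtain ⟨P, hP⟩ := hT.exists_side
  rw [hP a ha b hb] at hab
  rw [hP b hb c hc] at hbc
  rw [hP a ha c hc]
  tauto

theorem notMem_of_not_adj (hT : IsCompleteBipartiteSet H T) (ha : a ∈ T) (hb : b ∈ T)
    (hab : H.Adj a b) (hza : ¬H.Adj z a) (hzb : ¬H.Adj z b) : z ∉ T := fun hz =>
  hza (hT.adj_of_not_adj_of_adj hb hz ha (fun h => hzb h.symm) hab.symm)

theorem exists_isBiclique_superset_s2 [Finite V] (hT : IsCompleteBipartiteSet H T) :
    ∃ S, IsBiclique H S ∧ T ⊆ S := by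
  obtain ⟨S, hTS, hmax⟩ :=
    (Set.toFinite {S | IsCompleteBipartiteSet H S ∧ T ⊆ S}).exists_le_maximal
      (a := T) ⟨hT, subset_rfl⟩
  exact ⟨S, ⟨hmax.prop.1, fun S' hS' hSS' =>
    hSS'.antisymm (hmax.le_of_ge ⟨hS', hTS.trans hSS'⟩ hSS')⟩, hTS⟩

end IsCompleteBipartiteSet

section Constructions

variable {H : SimpleGraph V} {a b c : V}

theorem isCompleteBipartiteSet_insert {L : Set V} (hL : L.Nonempty)
    (hadj : ∀ x ∈ L, H.Adj a x) (hind : ∀ x ∈ L, ∀ y ∈ L, ¬H.Adj x y) :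
    IsCompleteBipartiteSet H (insert a L) :=
  ⟨{a}, L, ⟨Set.singleton_nonempty a, hL,
    Set.disjoint_singleton_left.2 fun ha => H.irrefl (hadj a ha),
    by simp, hind, by simpa using hadj⟩, Set.singleton_union⟩

theorem isCompleteBipartiteSet_pair (h : H.Adj a b) : IsCompleteBipartiteSet H {a, b} :=
  isCompleteBipartiteSet_insert (Set.singleton_nonempty b) (by simpa using h) (by simp)

theorem isCompleteBipartiteSet_cherry (hab : H.Adj a b) (hac : H.Adj a c) (hbc : ¬H.Adj b c) :
    IsCompleteBipartiteSet H {a, b, c} :=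
  isCompleteBipartiteSet_insert (Set.insert_nonempty b {c}) (by simp [hab, hac])
    (by simp [hbc, H.adj_comm c b])

end Constructions

theorem SimpleGraph.Connected.eq_univ_of_forall_adj {G : SimpleGraph V} (hG : G.Connected)
    {s : Set V} (hs : s.Nonempty) (hcl : ∀ x ∈ s, ∀ y, G.Adj x y → y ∈ s) : s = Set.univ := by
  obtain ⟨x, hx⟩ := hs
  refine Set.eq_univ_of_forall fun y => ?_
  obtain ⟨p⟩ := hG.preconnected x y
  induction p with
  | nil => exact hx
  | cons h _ ih => exact ih (hcl _ hx _ h)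

def bicliquesMeeting (H : SimpleGraph V) (B : Set V) : Set (Set V) :=
  {S | IsBiclique H S ∧ S ≠ B ∧ (S ∩ B).Nonempty}

structure LowDegreeBiclique (V : Type) [Fintype V] where
  H : SimpleGraph V
  B : Set V
  B1 : Set V
  B2 : Set V
  connected : H.Connected
  twinFree : ∀ v w : V, v ≠ w → H.neighborSet v ≠ H.neighborSet w
  card_ge : 7 ≤ Fintype.card V
  isBiclique : IsBiclique H B
  isCBP : IsCBP H B1 B2
  union_eq : B1 ∪ B2 = B
  ncard_le : (bicliquesMeeting H B).ncard ≤ 2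

namespace LowDegreeBiclique

variable [Fintype V] (C : LowDegreeBiclique V)

def swap : LowDegreeBiclique V where
  __ := C
  B1 := C.B2
  B2 := C.B1
  isCBP := by
    obtain ⟨h1, h2, h3, h4, h5, h6⟩ := C.isCBP
    exact ⟨h2, h1, h3.symm, h5, h4, fun a ha b hb => (h6 b hb a ha).symm⟩
  union_eq := Set.union_comm C.B2 C.B1 ▸ C.union_eq

def E (x : V) : Set V := C.H.neighborSet x \ C.B

theorem eq_of_neighborSet_eq {x y : V} (h : C.H.neighborSet x = C.H.neighborSet y) : x = y :=
  by_contra fun hne => C.twinFree x y hne h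

variable {C} {u v w x x' y ξ : V}

theorem B1_subset : C.B1 ⊆ C.B := C.union_eq ▸ Set.subset_union_left

theorem B2_subset : C.B2 ⊆ C.B := C.union_eq ▸ Set.subset_union_right

theorem mem_B1_or_mem_B2 (hx : x ∈ C.B) : x ∈ C.B1 ∨ x ∈ C.B2 := by
  rwa [← C.union_eq] at hx

theorem adj_of_mem_B1_of_mem_B2 (hx : x ∈ C.B1) (hy : y ∈ C.B2) : C.H.Adj x y :=
  C.isCBP.2.2.2.2.2 x hx y hy

theorem not_adj_of_mem_B1 (hx : x ∈ C.B1) (hy : y ∈ C.B1) : ¬C.H.Adj x y :=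
  C.isCBP.2.2.2.1 x hx y hy

theorem not_adj_of_mem_B2 (hx : x ∈ C.B2) (hy : y ∈ C.B2) : ¬C.H.Adj x y :=
  C.isCBP.2.2.2.2.1 x hx y hy

theorem adj_iff_of_mem_B {z : V} (hx : x ∈ C.B1) (hy : y ∈ C.B1) (hz : z ∈ C.B) :
    C.H.Adj x z ↔ C.H.Adj y z := by
  rcases mem_B1_or_mem_B2 hz with hz | hz
  · simp [not_adj_of_mem_B1 hx hz, not_adj_of_mem_B1 hy hz]
  · simp [adj_of_mem_B1_of_mem_B2 hx hz, adj_of_mem_B1_of_mem_B2 hy hz]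

theorem E_injOn : Set.InjOn C.E C.B1 := fun x hx y hy hxy =>
  C.eq_of_neighborSet_eq <| Set.ext fun z => by
    by_cases hz : z ∈ C.B
    · exact adj_iff_of_mem_B hx hy hz
    · exact ⟨fun h => (hxy ▸ ⟨h, hz⟩ : z ∈ C.E y).1, fun h => (hxy ▸ ⟨h, hz⟩ : z ∈ C.E x).1⟩

theorem not_subset_of_subset (hx : x ∈ C.B1) (hy : y ∈ C.B1) (hxy : x ≠ y)
    (h : C.E x ⊆ C.E y) : ¬C.E y ⊆ C.E x := fun h' => hxy (E_injOn hx hy (h.antisymm h'))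

theorem exists_mem_E_not_adj (h : ¬C.E x ⊆ C.E y) : ∃ w ∈ C.E x, ¬C.H.Adj y w := by
  obtain ⟨w, hw, hwy⟩ := Set.not_subset.1 h
  exact ⟨w, hw, fun h => hwy ⟨h, hw.2⟩⟩

theorem exists_mem_E_not_adj_of_subset (hx : x ∈ C.B1) (hy : y ∈ C.B1) (hxy : x ≠ y)
    (h : C.E y ⊆ C.E x) : ∃ w ∈ C.E x, ¬C.H.Adj y w :=
  exists_mem_E_not_adj (not_subset_of_subset hy hx hxy.symm h)

theorem not_adj_of_E_eq_empty (hx : C.E x = ∅) (hw : w ∉ C.B) : ¬C.H.Adj x w :=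
  fun h => Set.eq_empty_iff_forall_notMem.1 hx w ⟨h, hw⟩

theorem adj_of_mem_of_E_eq_empty {Z : Set V} {u : V} (hZ : IsCompleteBipartiteSet C.H Z)
    (hu : u ∈ C.B2) (hEu : C.E u = ∅) (hx : x ∈ C.B1) (huZ : u ∈ Z) (hxZ : x ∈ Z)
    (hwZ : w ∈ Z) (hw : w ∉ C.B) : C.H.Adj x w :=
  (hZ.adj_of_not_adj_of_adj huZ hwZ hxZ (not_adj_of_E_eq_empty hEu hw)
    (adj_of_mem_B1_of_mem_B2 hx hu).symm).symm

theorem exists_adj_B2_of_forall_adj_B1 (hw : w ∉ C.B) (hadj : ∀ x ∈ C.B1, C.H.Adj w x) :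
    ∃ u ∈ C.B2, C.H.Adj w u := by
  by_contra! hcon
  obtain ⟨h1, h2, h3, h4, h5, h6⟩ := C.isCBP
  have hcbp : IsCompleteBipartiteSet C.H (C.B1 ∪ (C.B2 ∪ {w})) := by
    refine ⟨C.B1, C.B2 ∪ {w}, ⟨h1, h2.mono Set.subset_union_left, ?_, h4, ?_, ?_⟩, rfl⟩
    · exact Set.disjoint_union_right.2 ⟨h3, Set.disjoint_singleton_right.2
        fun hwB => hw (B1_subset hwB)⟩
    · rintro a (ha | rfl) b (hb | rfl)
      · exact h5 a ha b hb
      · exact fun h => hcon a ha h.symm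
      · exact hcon b hb
      · exact C.H.irrefl
    · rintro a ha b (hb | rfl)
      · exact h6 a ha b hb
      · exact (hadj a ha).symm
  have := C.isBiclique.2 _ hcbp (by
    rw [← C.union_eq, ← Set.union_assoc]
    exact Set.subset_union_left)
  exact hw (this ▸ Or.inr (Or.inr rfl))

theorem false_of_closed (C : LowDegreeBiclique V) (s t : Finset V) (hs : s.card ≤ 4)
    (ht : t.card ≤ 2) (hB : C.B ⊆ s) (hE : ∀ x ∈ C.B, C.E x ⊆ t)
    (hN : ∀ w ∈ t, C.H.neighborSet w ⊆ C.B ∪ t) : False := by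
  classical
  obtain ⟨x, hx⟩ := C.isCBP.1
  have huniv := C.connected.eq_univ_of_forall_adj (s := C.B ∪ t) ⟨x, Or.inl (B1_subset hx)⟩
    fun x hx y hxy => by
      rcases hx with hxB | hxt
      · by_cases hyB : y ∈ C.B
        · exact Or.inl hyB
        · exact Or.inr (hE x hxB ⟨hxy, hyB⟩)
      · exact hN x hxt hxy
  have : Fintype.card V ≤ (s ∪ t).card := by
    rw [← Finset.card_univ]
    refine Finset.card_le_card fun v _ => ?_
    have hv : v ∈ C.B ∪ t := huniv ▸ Set.mem_univ v
    rcases hv with hv | hv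
    · exact Finset.mem_union_left t (hB hv)
    · exact Finset.mem_union_right s hv
  have := Finset.card_union_le s t
  have := C.card_ge
  omega

theorem exists_mem_bicliquesMeeting_superset {S : Set V} (hS : IsCompleteBipartiteSet C.H S)
    (hx : x ∈ S) (hxB : x ∈ C.B) (hy : y ∈ S) (hyB : y ∉ C.B) :
    ∃ X ∈ bicliquesMeeting C.H C.B, S ⊆ X := by
  obtain ⟨T, hT, hST⟩ := hS.exists_isBiclique_superset_s2
  exact ⟨T, ⟨hT, fun h => hyB (h ▸ hST hy), x, hST hx, hxB⟩, hST⟩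

theorem exists_separating (hx : x ∈ C.B1) (hy : y ∈ C.B1) (hw : w ∈ C.E x)
    (hyw : ¬C.H.Adj y w) : ∃ X ∈ bicliquesMeeting C.H C.B, x ∈ X ∧ w ∈ X ∧ y ∉ X := by
  obtain ⟨X, hX, hsub⟩ := exists_mem_bicliquesMeeting_superset
    (isCompleteBipartiteSet_pair hw.1) (by simp) (B1_subset hx) (by simp) hw.2
  exact ⟨X, hX, hsub (by simp), hsub (by simp), hX.1.1.notMem_of_not_adj (hsub (by simp))
    (hsub (by simp)) hw.1 (not_adj_of_mem_B1 hy hx) hyw⟩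

theorem exists_separating_of_not_subset (hx : x ∈ C.B1) (hy : y ∈ C.B1)
    (h : ¬C.E x ⊆ C.E y) : ∃ X ∈ bicliquesMeeting C.H C.B, x ∈ X ∧ y ∉ X := by
  obtain ⟨w, hw, hyw⟩ := exists_mem_E_not_adj h
  obtain ⟨X, hX, hxX, -, hyX⟩ := exists_separating hx hy hw hyw
  exact ⟨X, hX, hxX, hyX⟩

section TwoBicliques

variable {X Y : Set V} (hX : X ∈ bicliquesMeeting C.H C.B) (hY : Y ∈ bicliquesMeeting C.H C.B)
  (hXY : X ≠ Y)
include hX hY hXY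

theorem eq_or_eq {Z : Set V} (hZ : Z ∈ bicliquesMeeting C.H C.B) : Z = X ∨ Z = Y := by
  by_contra! h
  have : ({X, Y, Z} : Set (Set V)).ncard = 3 :=
    Set.ncard_eq_three.2 ⟨X, Y, Z, hXY, h.1.symm, h.2.symm, rfl⟩
  have := Set.ncard_le_ncard (s := {X, Y, Z}) (t := bicliquesMeeting C.H C.B)
    (by simp [Set.insert_subset_iff, hX, hY, hZ]) (Set.toFinite _)
  have := C.ncard_le
  omega

theorem subset_or_subset {S : Set V} (hS : IsCompleteBipartiteSet C.H S) (hx : x ∈ S)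
    (hxB : x ∈ C.B) (hy : y ∈ S) (hyB : y ∉ C.B) : S ⊆ X ∨ S ⊆ Y := by
  obtain ⟨Z, hZ, hSZ⟩ := exists_mem_bicliquesMeeting_superset hS hx hxB hy hyB
  rcases eq_or_eq hX hY hXY hZ with rfl | rfl
  · exact Or.inl hSZ
  · exact Or.inr hSZ

theorem pair_subset_of_notMem (hx : x ∈ C.B) (hxY : x ∉ Y) (hw : w ∈ C.E x) : {x, w} ⊆ X :=
  (subset_or_subset hX hY hXY (isCompleteBipartiteSet_pair hw.1) (by simp) hx (by simp)
    hw.2).resolve_right fun h => hxY (h (by simp))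

theorem not_adj_of_mem_E (hx : x ∈ C.B1) (hxY : x ∉ Y) (hy : y ∈ C.B1) (hyX : y ∉ X)
    (hw : w ∈ C.E x) : ¬C.H.Adj y w := fun hyw => by
  rcases subset_or_subset hX hY hXY (isCompleteBipartiteSet_cherry hw.1.symm hyw.symm
    (not_adj_of_mem_B1 hx hy)) (by simp) (B1_subset hx) (by simp) hw.2 with h | h
  · exact hyX (h (by simp))
  · exact hxY (h (by simp))

theorem E_subset_E_of_notMem (hx : x ∈ C.B1) (hy : y ∈ C.B2) (hxY : x ∉ Y) (hyX : y ∉ X) :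
    C.E x ⊆ C.E y := fun w hw => by
  by_contra hyw
  have hyw : ¬C.H.Adj y w := fun h => hyw ⟨h, hw.2⟩
  rcases subset_or_subset hX hY hXY (isCompleteBipartiteSet_cherry
    (adj_of_mem_B1_of_mem_B2 hx hy) hw.1 hyw) (by simp) (B1_subset hx) (by simp) hw.2 with h | h
  · exact hyX (h (by simp))
  · exact hxY (h (by simp))

theorem E_eq_of_notMem (hx : x ∈ C.B1) (hy : y ∈ C.B2) (hxY : x ∉ Y) (hyX : y ∉ X) :
    C.E x = C.E y :=
  (E_subset_E_of_notMem hX hY hXY hx hy hxY hyX).antisymm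
    (E_subset_E_of_notMem (C := C.swap) hY hX hXY.symm hy hx hyX hxY)

end TwoBicliques

namespace Claw

theorem false_of_incomparable {a b c : V} (ha : a ∈ C.B1) (hb : b ∈ C.B1) (hc : c ∈ C.B1)
    (hab : ¬C.E a ⊆ C.E b) (hba : ¬C.E b ⊆ C.E a) (hac : ¬C.E a ⊆ C.E c)
    (hca : ¬C.E c ⊆ C.E a) (hbc : ¬C.E b ⊆ C.E c) : False := by
  obtain ⟨X, hX, haX, hbX⟩ := exists_separating_of_not_subset ha hb hab
  obtain ⟨Y, hY, hbY, haY⟩ := exists_separating_of_not_subset hb ha hba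
  have hXY : X ≠ Y := fun h => haY (h ▸ haX)
  have hcX : c ∉ X := by
    obtain ⟨Z, hZ, haZ, hcZ⟩ := exists_separating_of_not_subset ha hc hac
    rcases eq_or_eq hX hY hXY hZ with rfl | rfl
    · exact hcZ
    · exact absurd haZ haY
  have hcY : c ∈ Y := by
    obtain ⟨Z, hZ, hcZ, -⟩ := exists_separating_of_not_subset hc ha hca
    rcases eq_or_eq hX hY hXY hZ with rfl | rfl
    · exact absurd hcZ hcX
    · exact hcZ
  obtain ⟨Z, hZ, hbZ, hcZ⟩ := exists_separating_of_not_subset hb hc hbc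
  rcases eq_or_eq hX hY hXY hZ with rfl | rfl
  · exact hbX hbZ
  · exact hcZ hcY

theorem false_of_incomparable_of_subset {a b c : V} (ha : a ∈ C.B1) (hb : b ∈ C.B1)
    (hc : c ∈ C.B1) (hac : C.E a ⊆ C.E c) (hbc : C.E b ⊆ C.E c) (hab : ¬C.E a ⊆ C.E b)
    (hba : ¬C.E b ⊆ C.E a) : False := by
  obtain ⟨w1, hw1, hbw1⟩ := exists_mem_E_not_adj hab
  obtain ⟨w2, hw2, haw2⟩ := exists_mem_E_not_adj hba
  obtain ⟨X, hX, haX, -, hbX⟩ := exists_separating ha hb hw1 hbw1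
  obtain ⟨Y, hY, hbY, -, haY⟩ := exists_separating hb ha hw2 haw2
  have hXY : X ≠ Y := fun h => haY (h ▸ haX)
  have hcX : c ∈ X := by
    obtain ⟨Z, hZ, hcZ, hbZ⟩ := exists_separating_of_not_subset hc hb fun h => hab (hac.trans h)
    rcases eq_or_eq hX hY hXY hZ with rfl | rfl
    · exact hcZ
    · exact absurd hbY hbZ
  have hcY : c ∈ Y := by
    obtain ⟨Z, hZ, hcZ, haZ⟩ := exists_separating_of_not_subset hc ha fun h => hba (hbc.trans h)
    rcases eq_or_eq hX hY hXY hZ with rfl | rfl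
    · exact absurd haX haZ
    · exact hcZ
  have hw2X : w2 ∉ X := fun hw2X =>
    haw2 (hX.1.1.adj_of_not_adj_of_adj hcX haX hw2X (not_adj_of_mem_B1 hc ha) (hbc hw2).1)
  by_cases hw12 : C.H.Adj w1 w2
  · rcases subset_or_subset hX hY hXY (isCompleteBipartiteSet_cherry hw1.1.symm hw12 haw2)
      (by simp) (B1_subset ha) (by simp) hw1.2 with h | h
    · exact hw2X (h (by simp))
    · exact haY (h (by simp))
  · rcases subset_or_subset hX hY hXY (isCompleteBipartiteSet_cherry (hac hw1).1 (hbc hw2).1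
      hw12) (by simp) (B1_subset hc) (by simp) hw1.2 with h | h
    · exact hw2X (h (by simp))
    · exact hbw1 (hY.1.1.adj_of_not_adj_of_adj hcY hbY (h (by simp))
        (not_adj_of_mem_B1 hc hb) (hac hw1).1)

section Isolated

variable {X Y : Set V} {a : V} (hX : X ∈ bicliquesMeeting C.H C.B)
  (hY : Y ∈ bicliquesMeeting C.H C.B) (hXY : X ≠ Y) (ha : a ∈ C.B1) (haX : a ∉ X)
  (haY : a ∉ Y)
include hX hY hXY ha haX haY

theorem E_eq_empty_of_notMem : C.E a = ∅ := by
  refine Set.eq_empty_of_forall_notMem fun w hw => ?_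
  rcases subset_or_subset hX hY hXY (isCompleteBipartiteSet_pair hw.1) (by simp)
    (B1_subset ha) (by simp) hw.2 with h | h
  · exact haX (h (by simp))
  · exact haY (h (by simp))

theorem E_eq_empty_of_mem_B2 (hu : u ∈ C.B2) : C.E u = ∅ := by
  refine Set.eq_empty_of_forall_notMem fun w hw => ?_
  have haw := not_adj_of_E_eq_empty (E_eq_empty_of_notMem hX hY hXY ha haX haY) hw.2
  rcases subset_or_subset hX hY hXY (isCompleteBipartiteSet_cherry
    (adj_of_mem_B1_of_mem_B2 ha hu).symm hw.1 haw) (by simp) (B2_subset hu) (by simp)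
    hw.2 with h | h
  · exact haX (h (by simp))
  · exact haY (h (by simp))

theorem eq_of_mem_B2 (hu : u ∈ C.B2) (hv : v ∈ C.B2) : v = u :=
  C.eq_of_neighborSet_eq <| Set.ext fun z => by
    by_cases hz : z ∈ C.B
    · exact adj_iff_of_mem_B (C := C.swap) hv hu hz
    · simp [not_adj_of_E_eq_empty (E_eq_empty_of_mem_B2 hX hY hXY ha haX haY hu) hz,
        not_adj_of_E_eq_empty (E_eq_empty_of_mem_B2 hX hY hXY ha haX haY hv) hz]

theorem cherry_subset (hx : x ∈ C.B1) (hu : u ∈ C.B2) (hw : w ∈ C.E x) :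
    {x, u, w} ⊆ X ∨ {x, u, w} ⊆ Y :=
  subset_or_subset hX hY hXY (isCompleteBipartiteSet_cherry (adj_of_mem_B1_of_mem_B2 hx hu)
    hw.1 (not_adj_of_E_eq_empty (E_eq_empty_of_mem_B2 hX hY hXY ha haX haY hu) hw.2))
    (by simp) (B1_subset hx) (by simp) hw.2

theorem cherry_subset_left (hx : x ∈ C.B1) (hxY : x ∉ Y) (hu : u ∈ C.B2) (hw : w ∈ C.E x) :
    {x, u, w} ⊆ X :=
  (cherry_subset hX hY hXY ha haX haY hx hu hw).resolve_right fun h => hxY (h (by simp))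

theorem adj_of_mem (hx : x ∈ C.B1) (hxY : x ∉ Y) (hw : w ∈ C.E x) (hu : u ∈ C.B2)
    (hvX : v ∈ X) (hvB : v ∉ C.B) : C.H.Adj x v := by
  have h := cherry_subset_left hX hY hXY ha haX haY hx hxY hu hw
  exact adj_of_mem_of_E_eq_empty hX.1.1 hu (E_eq_empty_of_mem_B2 hX hY hXY ha haX haY hu) hx
    (h (by simp)) (h (by simp)) hvX hvB

theorem E_subset_E_of_mem {d : V} (hx : x ∈ C.B1) (hxY : x ∉ Y) (hd : d ∈ C.B1) (hdX : d ∈ X) :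
    C.E x ⊆ C.E d := fun w hw => by
  obtain ⟨u, hu⟩ := C.isCBP.2.1
  have h := cherry_subset_left hX hY hXY ha haX haY hx hxY hu hw
  exact ⟨hX.1.1.adj_of_not_adj_of_adj (h (by simp)) hdX (h (by simp)) (not_adj_of_mem_B1 hx hd)
    hw.1, hw.2⟩

theorem E_nonempty {d : V} (hd : d ∈ C.B1) (hda : d ≠ a) : (C.E d).Nonempty :=
  Set.nonempty_iff_ne_empty.2 fun h =>
    hda (E_injOn hd ha (h.trans (E_eq_empty_of_notMem hX hY hXY ha haX haY).symm))

theorem neighborSet_subset_B (hx : x ∈ C.B1) (hxY : x ∉ Y) (hw : w ∈ C.E x) :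
    C.H.neighborSet w ⊆ C.B := by
  obtain ⟨u, hu⟩ := C.isCBP.2.1
  have hsub : ∀ {v}, v ∈ C.E x → {x, u, v} ⊆ X :=
    cherry_subset_left hX hY hXY ha haX haY hx hxY hu
  intro y hwy
  by_contra hyB
  by_cases hxy : C.H.Adj x y
  · exact hX.1.1.not_adj_of_adj_of_adj (hsub hw (by simp)) (hsub hw (by simp))
      (hsub ⟨hxy, hyB⟩ (by simp)) hw.1 hwy hxy
  · rcases subset_or_subset hX hY hXY (isCompleteBipartiteSet_cherry hw.1.symm hwy hxy)
      (by simp) (B1_subset hx) (by simp) hyB with h | h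
    · exact hxy (adj_of_mem hX hY hXY ha haX haY hx hxY hw hu (h (by simp)) hyB)
    · exact hxY (h (by simp))

theorem not_adj_of_mem_E_of_not_adj {b : V} (hb : b ∈ C.B1) (hbY : b ∉ Y) (hy : y ∈ C.E b)
    (hwB : w ∉ C.B) (hbw : ¬C.H.Adj b w) : ¬C.H.Adj y w := fun hyw => by
  obtain ⟨u, hu⟩ := C.isCBP.2.1
  rcases subset_or_subset hX hY hXY (isCompleteBipartiteSet_cherry hy.1.symm hyw hbw)
    (by simp) (B1_subset hb) (by simp) hy.2 with h | h
  · exact hbw (adj_of_mem hX hY hXY ha haX haY hb hbY hy hu (h (by simp)) hwB)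
  · exact hbY (h (by simp))

theorem eq_or_eq_of_adj {b c z : V} (hB1 : ∀ t ∈ C.B1, t = a ∨ t = b ∨ t = c) (hwB : w ∉ C.B)
    (hN : C.H.neighborSet w ⊆ C.B) (hz : C.H.Adj w z) : z = b ∨ z = c := by
  rcases mem_B1_or_mem_B2 (hN hz) with hz' | hz'
  · rcases hB1 z hz' with rfl | h | h
    · exact absurd hz.symm
        (not_adj_of_E_eq_empty (E_eq_empty_of_notMem hX hY hXY ha haX haY) hwB)
    · exact Or.inl h
    · exact Or.inr h
  · exact absurd hz.symm
      (not_adj_of_E_eq_empty (E_eq_empty_of_mem_B2 hX hY hXY ha haX haY hz') hwB)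

theorem false_of_forall_eq {b c : V} (hB1 : ∀ t ∈ C.B1, t = a ∨ t = b ∨ t = c) (t : Finset V)
    (ht : t.card ≤ 2) (hEb : C.E b ⊆ t) (hEc : C.E c ⊆ t)
    (hN : ∀ w ∈ t, C.H.neighborSet w ⊆ C.B) : False := by
  classical
  obtain ⟨u, hu⟩ := C.isCBP.2.1
  refine C.false_of_closed {a, b, c, u} t Finset.card_le_four ht (fun x hx => ?_)
    (fun x hx => ?_) fun w hw => (hN w hw).trans Set.subset_union_left
  · rcases mem_B1_or_mem_B2 hx with hx | hx
    · rcases hB1 x hx with rfl | rfl | rfl <;> simp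
    · simp [eq_of_mem_B2 hX hY hXY ha haX haY hu hx]
  · rcases mem_B1_or_mem_B2 hx with hx | hx
    · rcases hB1 x hx with rfl | rfl | rfl
      · simp [E_eq_empty_of_notMem hX hY hXY hx haX haY]
      · exact hEb
      · exact hEc
    · simp [E_eq_empty_of_mem_B2 hX hY hXY ha haX haY hx]

section Min

variable {b c : V} (hb : b ∈ C.B1) (hbY : b ∉ Y) (hc : c ∈ C.B1) (hcX : c ∉ X)
include hb hbY hc hcX

theorem false_of_min_of_mem {d w1 w2 : V} (hd : d ∈ C.B1) (hda : d ≠ a) (hdb : d ≠ b)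
    (hdc : d ≠ c) (hw1 : w1 ∈ C.E b) (hw2 : w2 ∈ C.E c) : False := by
  obtain ⟨u, hu⟩ := C.isCBP.2.1
  have hXadj : ∀ {v}, v ∈ X → v ∉ C.B → C.H.Adj b v :=
    adj_of_mem hX hY hXY ha haX haY hb hbY hw1 hu
  have hYadj : ∀ {v}, v ∈ Y → v ∉ C.B → C.H.Adj c v :=
    adj_of_mem hY hX hXY.symm ha haY haX hc hcX hw2 hu
  have hdX : d ∈ X → C.E b ⊆ C.E d := E_subset_E_of_mem hX hY hXY ha haX haY hb hbY hd
  have hdY : d ∈ Y → C.E c ⊆ C.E d := E_subset_E_of_mem hY hX hXY.symm ha haY haX hc hcX hd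
  obtain ⟨w0, hw0⟩ := E_nonempty hX hY hXY ha haX haY hd hda
  have hsub : C.E b ⊆ C.E d ∧ C.E c ⊆ C.E d := by
    rcases cherry_subset hX hY hXY ha haX haY hd hu hw0 with h | h
    · obtain ⟨w, hw, hbw⟩ := exists_mem_E_not_adj_of_subset hd hb hdb (hdX (h (by simp)))
      rcases cherry_subset hX hY hXY ha haX haY hd hu hw with h' | h'
      · exact absurd (hXadj (h' (by simp)) hw.2) hbw
      · exact ⟨hdX (h (by simp)), hdY (h' (by simp))⟩
    · obtain ⟨w, hw, hcw⟩ := exists_mem_E_not_adj_of_subset hd hc hdc (hdY (h (by simp)))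
      rcases cherry_subset hX hY hXY ha haX haY hd hu hw with h' | h'
      · exact ⟨hdX (h' (by simp)), hdY (h (by simp))⟩
      · exact absurd (hYadj (h' (by simp)) hw.2) hcw
  have hbw2 : ¬C.H.Adj b w2 := not_adj_of_mem_E hY hX hXY.symm hc hcX hb hbY hw2
  have hw2X : w2 ∉ X := fun h => hbw2 (hXadj h hw2.2)
  have hw1Y : w1 ∉ Y := fun h => not_adj_of_mem_E hX hY hXY hb hbY hc hcX hw1 (hYadj h hw1.2)
  by_cases hw12 : C.H.Adj w1 w2
  · rcases subset_or_subset hX hY hXY (isCompleteBipartiteSet_cherry hw1.1.symm hw12 hbw2)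
      (by simp) (B1_subset hb) (by simp) hw1.2 with h | h
    · exact hw2X (h (by simp))
    · exact hbY (h (by simp))
  · rcases subset_or_subset hX hY hXY (isCompleteBipartiteSet_cherry (hsub.1 hw1).1
      (hsub.2 hw2).1 hw12) (by simp) (B1_subset hd) (by simp) hw1.2 with h | h
    · exact hw2X (h (by simp))
    · exact hw1Y (h (by simp))

theorem neighborSet_eq_singleton_of_min (hB1 : ∀ t ∈ C.B1, t = a ∨ t = b ∨ t = c)
    (hw : w ∈ C.E b) : C.H.neighborSet w = {b} := by
  ext z
  simp only [mem_neighborSet, Set.mem_singleton_iff]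
  refine ⟨fun hz => ?_, fun hz => hz ▸ hw.1.symm⟩
  rcases eq_or_eq_of_adj hX hY hXY ha haX haY hB1 hw.2
    (neighborSet_subset_B hX hY hXY ha haX haY hb hbY hw) hz with rfl | rfl
  · rfl
  · exact absurd hz.symm (not_adj_of_mem_E hX hY hXY hb hbY hc hcX hw)

theorem false_of_min_of_forall_eq (hB1 : ∀ t ∈ C.B1, t = a ∨ t = b ∨ t = c) {w1 w2 : V}
    (hw1 : w1 ∈ C.E b) (hw2 : w2 ∈ C.E c) : False := by
  classical
  have hNb : ∀ {w}, w ∈ C.E b → C.H.neighborSet w = {b} :=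
    neighborSet_eq_singleton_of_min hX hY hXY ha haX haY hb hbY hc hcX hB1
  have hNc : ∀ {w}, w ∈ C.E c → C.H.neighborSet w = {c} :=
    neighborSet_eq_singleton_of_min hY hX hXY.symm ha haY haX hc hcX hb hbY
      fun t ht => by rcases hB1 t ht with h | h | h <;> simp [h]
  refine false_of_forall_eq hX hY hXY ha haX haY hB1 {w1, w2} Finset.card_le_two
    (fun v hv => ?_) (fun v hv => ?_) fun w hw => ?_
  · simp [C.eq_of_neighborSet_eq ((hNb hv).trans (hNb hw1).symm)]
  · simp [C.eq_of_neighborSet_eq ((hNc hv).trans (hNc hw2).symm)]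
  · simp only [Finset.mem_insert, Finset.mem_singleton] at hw
    rcases hw with rfl | rfl
    · exact neighborSet_subset_B hX hY hXY ha haX haY hb hbY hw1
    · exact neighborSet_subset_B hY hX hXY.symm ha haY haX hc hcX hw2

end Min

section Chain

variable {b c : V} (hb : b ∈ C.B1) (hbY : b ∉ Y) (hc : c ∈ C.B1)
include hb hbY hc

theorem cherry_subset_right_of_chain {wb : V} (hwb : wb ∈ C.E b) (hu : u ∈ C.B2)
    (hw : w ∈ C.E c) (hbw : ¬C.H.Adj b w) : {c, u, w} ⊆ Y :=
  (cherry_subset hX hY hXY ha haX haY hc hu hw).resolve_left fun h =>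
    hbw (adj_of_mem hX hY hXY ha haX haY hb hbY hwb hu (h (by simp)) hw.2)

theorem neighborSet_subset_B_of_chain {wb : V} (hwb : wb ∈ C.E b) (hw : w ∈ C.E c)
    (hbw : ¬C.H.Adj b w) : C.H.neighborSet w ⊆ C.B := by
  obtain ⟨u, hu⟩ := C.isCBP.2.1
  have hsub : ∀ {v}, v ∈ C.E c → ¬C.H.Adj b v → {c, u, v} ⊆ Y :=
    cherry_subset_right_of_chain hX hY hXY ha haX haY hb hbY hc hwb hu
  intro y hwy
  by_contra hyB
  by_cases hcy : C.H.Adj c y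
  · by_cases hby : C.H.Adj b y
    · exact not_adj_of_mem_E_of_not_adj hX hY hXY ha haX haY hb hbY ⟨hby, hyB⟩ hw.2 hbw
        hwy.symm
    · exact hY.1.1.not_adj_of_adj_of_adj (hsub hw hbw (by simp)) (hsub hw hbw (by simp))
        (hsub ⟨hcy, hyB⟩ hby (by simp)) hw.1 hwy hcy
  · rcases subset_or_subset hX hY hXY (isCompleteBipartiteSet_cherry hw.1.symm hwy hcy)
      (by simp) (B1_subset hc) (by simp) hyB with h | h
    · exact hbw (adj_of_mem hX hY hXY ha haX haY hb hbY hwb hu (h (by simp)) hw.2)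
    · exact hcy (adj_of_mem_of_E_eq_empty hY.1.1 hu
        (E_eq_empty_of_mem_B2 hX hY hXY ha haX haY hu) hc (hsub hw hbw (by simp))
        (hsub hw hbw (by simp)) (h (by simp)) hyB)

theorem notMem_of_chain {wb wc d : V} (hbc : C.E b ⊆ C.E c) (hwb : wb ∈ C.E b)
    (hwc : wc ∈ C.E c) (hbwc : ¬C.H.Adj b wc) (hd : d ∈ C.B1) (hdb : d ≠ b) (hdc : d ≠ c) :
    d ∉ X := by
  intro hdX
  obtain ⟨u, hu⟩ := C.isCBP.2.1
  have hsubY : ∀ {v}, v ∈ C.E c → ¬C.H.Adj b v → {c, u, v} ⊆ Y :=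
    cherry_subset_right_of_chain hX hY hXY ha haX haY hb hbY hc hwb hu
  have hcY : c ∈ Y := hsubY hwc hbwc (by simp)
  have hbd := E_subset_E_of_mem hX hY hXY ha haX haY hb hbY hd hdX
  obtain ⟨v, hv, hbv⟩ := exists_mem_E_not_adj_of_subset hd hb hdb hbd
  rcases cherry_subset hX hY hXY ha haX haY hd hu hv with h | h
  · exact hbv (adj_of_mem hX hY hXY ha haX haY hb hbY hwb hu (h (by simp)) hv.2)
  refine hdc (E_injOn hd hc (Set.Subset.antisymm (fun v hv => ?_) fun v hv => ?_))
  · rcases cherry_subset hX hY hXY ha haX haY hd hu hv with h' | h'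
    · exact hbc ⟨adj_of_mem hX hY hXY ha haX haY hb hbY hwb hu (h' (by simp)) hv.2, hv.2⟩
    · exact ⟨adj_of_mem_of_E_eq_empty hY.1.1 hu (E_eq_empty_of_mem_B2 hX hY hXY ha haX haY hu)
        hc (h' (by simp)) hcY (h' (by simp)) hv.2, hv.2⟩
  · by_cases hbv' : C.H.Adj b v
    · exact hbd ⟨hbv', hv.2⟩
    · exact ⟨hY.1.1.adj_of_not_adj_of_adj hcY (h (by simp)) (hsubY hv hbv' (by simp))
        (not_adj_of_mem_B1 hc hd) hv.1, hv.2⟩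

theorem false_of_chain_of_mem {wb wc d : V} (hbc : C.E b ⊆ C.E c) (hwb : wb ∈ C.E b)
    (hwc : wc ∈ C.E c) (hbwc : ¬C.H.Adj b wc) (hd : d ∈ C.B1) (hda : d ≠ a) (hdb : d ≠ b)
    (hdc : d ≠ c) : False := by
  obtain ⟨u, hu⟩ := C.isCBP.2.1
  have hdX := notMem_of_chain hX hY hXY ha haX haY hb hbY hc hbc hwb hwc hbwc hd hdb hdc
  have hcY : c ∈ Y :=
    cherry_subset_right_of_chain hX hY hXY ha haX haY hb hbY hc hwb hu hwc hbwc (by simp)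
  obtain ⟨w0, hw0⟩ := E_nonempty hX hY hXY ha haX haY hd hda
  have hdY : d ∈ Y := (cherry_subset hX hY hXY ha haX haY hd hu hw0).elim
    (fun h => absurd (h (by simp)) hdX) fun h => h (by simp)
  rcases subset_or_subset hX hY hXY (isCompleteBipartiteSet_cherry (hbc hwb).1 hwc.1
    (not_adj_of_mem_E_of_not_adj hX hY hXY ha haX haY hb hbY hwb hwc.2 hbwc)) (by simp) (B1_subset hc)
    (by simp) hwb.2 with h | h
  · exact hbwc (adj_of_mem hX hY hXY ha haX haY hb hbY hwb hu (h (by simp)) hwc.2)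
  · exact not_adj_of_mem_E hX hY hXY hb hbY hd hdX hwb (hY.1.1.adj_of_not_adj_of_adj hcY hdY
      (h (by simp)) (not_adj_of_mem_B1 hc hd) (hbc hwb).1)

theorem false_of_chain_of_forall_eq {wb wc : V} (hB1 : ∀ t ∈ C.B1, t = a ∨ t = b ∨ t = c)
    (hbc : C.E b ⊆ C.E c) (hwb : wb ∈ C.E b) (hwc : wc ∈ C.E c) (hbwc : ¬C.H.Adj b wc) :
    False := by
  classical
  have hNb : ∀ {v}, v ∈ C.E b → C.H.neighborSet v = {b, c} := fun {v} hv => by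
    ext z
    simp only [mem_neighborSet, Set.mem_insert_iff, Set.mem_singleton_iff]
    refine ⟨eq_or_eq_of_adj hX hY hXY ha haX haY hB1 hv.2
      (neighborSet_subset_B hX hY hXY ha haX haY hb hbY hv), ?_⟩
    rintro (rfl | rfl)
    · exact hv.1.symm
    · exact (hbc hv).1.symm
  have hNc : ∀ {v}, v ∈ C.E c → ¬C.H.Adj b v → C.H.neighborSet v = {c} := fun {v} hv hbv => by
    ext z
    simp only [mem_neighborSet, Set.mem_singleton_iff]
    refine ⟨fun hz => ?_, fun hz => hz ▸ hv.1.symm⟩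
    rcases eq_or_eq_of_adj hX hY hXY ha haX haY hB1 hv.2
      (neighborSet_subset_B_of_chain hX hY hXY ha haX haY hb hbY hc hwb hv hbv) hz with rfl | h
    · exact absurd hz.symm hbv
    · exact h
  have hEb : ∀ {v}, v ∈ C.E b → v = wb := fun hv =>
    C.eq_of_neighborSet_eq ((hNb hv).trans (hNb hwb).symm)
  refine false_of_forall_eq hX hY hXY ha haX haY hB1 {wb, wc} Finset.card_le_two
    (fun v hv => by simp [hEb hv]) (fun v hv => ?_) fun w hw => ?_
  · by_cases hbv : C.H.Adj b v
    · simp [hEb ⟨hbv, hv.2⟩]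
    · simp [C.eq_of_neighborSet_eq ((hNc hv hbv).trans (hNc hwc hbwc).symm)]
  · simp only [Finset.mem_insert, Finset.mem_singleton] at hw
    rcases hw with rfl | rfl
    · exact neighborSet_subset_B hX hY hXY ha haX haY hb hbY hwb
    · exact neighborSet_subset_B_of_chain hX hY hXY ha haX haY hb hbY hc hwb hwc hbwc

end Chain

end Isolated

theorem false_of_incomparable_of_not_subset {a b c : V} (ha : a ∈ C.B1) (hb : b ∈ C.B1)
    (hc : c ∈ C.B1) (hba : ¬C.E b ⊆ C.E a) (hca : ¬C.E c ⊆ C.E a) (hbc : ¬C.E b ⊆ C.E c)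
    (hcb : ¬C.E c ⊆ C.E b) : False := by
  obtain ⟨w1, hw1, hcw1⟩ := exists_mem_E_not_adj hbc
  obtain ⟨w2, hw2, hbw2⟩ := exists_mem_E_not_adj hcb
  obtain ⟨X, hX, hbX, -, hcX⟩ := exists_separating hb hc hw1 hcw1
  obtain ⟨Y, hY, hcY, -, hbY⟩ := exists_separating hc hb hw2 hbw2
  have hXY : X ≠ Y := fun h => hbY (h ▸ hbX)
  have haX : a ∉ X := by
    obtain ⟨Z, hZ, hbZ, haZ⟩ := exists_separating_of_not_subset hb ha hba
    rcases eq_or_eq hX hY hXY hZ with rfl | rfl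
    · exact haZ
    · exact absurd hbZ hbY
  have haY : a ∉ Y := by
    obtain ⟨Z, hZ, hcZ, haZ⟩ := exists_separating_of_not_subset hc ha hca
    rcases eq_or_eq hX hY hXY hZ with rfl | rfl
    · exact absurd hcZ hcX
    · exact haZ
  by_cases hd : ∃ d ∈ C.B1, d ≠ a ∧ d ≠ b ∧ d ≠ c
  · obtain ⟨d, hd, hda, hdb, hdc⟩ := hd
    exact false_of_min_of_mem hX hY hXY ha haX haY hb hbY hc hcX hd hda hdb hdc hw1 hw2
  · refine false_of_min_of_forall_eq hX hY hXY ha haX haY hb hbY hc hcX (fun t ht => ?_) hw1 hw2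
    by_contra! h
    exact hd ⟨t, ht, h⟩

theorem false_of_chain {a b c : V} (ha : a ∈ C.B1) (hb : b ∈ C.B1) (hc : c ∈ C.B1)
    (hab : C.E a ⊆ C.E b) (hbc : C.E b ⊆ C.E c) (hba : ¬C.E b ⊆ C.E a)
    (hcb : ¬C.E c ⊆ C.E b) : False := by
  obtain ⟨wb, hwb, hawb⟩ := exists_mem_E_not_adj hba
  obtain ⟨wc, hwc, hbwc⟩ := exists_mem_E_not_adj hcb
  obtain ⟨X, hX, hbX, -, haX⟩ := exists_separating hb ha hwb hawb
  obtain ⟨Y, hY, hcY, hwcY, hbY⟩ := exists_separating hc hb hwc hbwc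
  have haY : a ∉ Y := hY.1.1.notMem_of_not_adj hcY hwcY hwc.1 (not_adj_of_mem_B1 ha hc)
    fun h => hbwc (hab ⟨h, hwc.2⟩).1
  have hXY : X ≠ Y := fun h => hbY (h ▸ hbX)
  by_cases hd : ∃ d ∈ C.B1, d ≠ a ∧ d ≠ b ∧ d ≠ c
  · obtain ⟨d, hd, hda, hdb, hdc⟩ := hd
    exact false_of_chain_of_mem hX hY hXY ha haX haY hb hbY hc hbc hwb hwc hbwc hd hda hdb hdc
  · refine false_of_chain_of_forall_eq hX hY hXY ha haX haY hb hbY hc (fun t ht => ?_) hbc hwb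
      hwc hbwc
    by_contra! h
    exact hd ⟨t, ht, h⟩

theorem false_of_subset {a b c : V} (ha : a ∈ C.B1) (hb : b ∈ C.B1) (hc : c ∈ C.B1)
    (hab : a ≠ b) (hac : a ≠ c) (hbc : b ≠ c) (h : C.E a ⊆ C.E b) : False := by
  have hba := not_subset_of_subset ha hb hab h
  by_cases hca : C.E c ⊆ C.E a
  · exact false_of_chain hc ha hb hca h (not_subset_of_subset hc ha hac.symm hca) hba
  by_cases hbc' : C.E b ⊆ C.E c
  · exact false_of_chain ha hb hc h hbc' hba (not_subset_of_subset hb hc hbc hbc')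
  by_cases hcb : C.E c ⊆ C.E b
  · by_cases hac' : C.E a ⊆ C.E c
    · exact false_of_chain ha hc hb hac' hcb hca hbc'
    · exact false_of_incomparable_of_subset ha hc hb h hcb hac' hca
  · exact false_of_incomparable_of_not_subset ha hb hc hba hca hbc' hcb

end Claw

theorem false_of_claw {a b c : V} (ha : a ∈ C.B1) (hb : b ∈ C.B1) (hc : c ∈ C.B1)
    (hab : a ≠ b) (hac : a ≠ c) (hbc : b ≠ c) : False := by
  by_cases h1 : C.E a ⊆ C.E b
  · exact Claw.false_of_subset ha hb hc hab hac hbc h1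
  by_cases h2 : C.E b ⊆ C.E a
  · exact Claw.false_of_subset hb ha hc hab.symm hbc hac h2
  by_cases h3 : C.E a ⊆ C.E c
  · exact Claw.false_of_subset ha hc hb hac hab hbc.symm h3
  by_cases h4 : C.E c ⊆ C.E a
  · exact Claw.false_of_subset hc ha hb hac.symm hbc.symm hab h4
  by_cases h5 : C.E b ⊆ C.E c
  · exact Claw.false_of_subset hb hc ha hbc hab.symm hac.symm h5
  exact Claw.false_of_incomparable ha hb hc h1 h2 h3 h4 h5

namespace Square

section EmptyE

variable {X Y : Set V} (hX : X ∈ bicliquesMeeting C.H C.B) (hY : Y ∈ bicliquesMeeting C.H C.B)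
  (hXY : X ≠ Y) (hx : x ∈ C.B1) (hx' : x' ∈ C.B1) (hEx' : C.E x' = ∅) (hx'Y : x' ∈ Y)
include hX hY hXY hx hx' hEx' hx'Y

theorem pair_subset_of_E_eq_empty (hξ : ξ ∈ C.E x) : {x, ξ} ⊆ X :=
  (subset_or_subset hX hY hXY (isCompleteBipartiteSet_pair hξ.1) (by simp) (B1_subset hx)
    (by simp) hξ.2).resolve_right fun h => not_adj_of_E_eq_empty hEx' hξ.2
      (hY.1.1.adj_of_not_adj_of_adj (h (by simp)) hx'Y (h (by simp)) (not_adj_of_mem_B1 hx hx')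
        hξ.1)

theorem neighborSet_subset_B_of_E_eq_empty (hy : y ∈ C.B2) (hEy : C.E y = ∅) (hxX : x ∈ X)
    (hyX : y ∈ X) (hξ : ξ ∈ C.E x) : C.H.neighborSet ξ ⊆ C.B := by
  have hpair : ∀ {v}, v ∈ C.E x → {x, v} ⊆ X :=
    pair_subset_of_E_eq_empty hX hY hXY hx hx' hEx' hx'Y
  intro z hξz
  by_contra hzB
  by_cases hxz : C.H.Adj x z
  · exact hX.1.1.not_adj_of_adj_of_adj hxX (hpair hξ (by simp)) (hpair ⟨hxz, hzB⟩ (by simp))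
      hξ.1 hξz hxz
  rcases subset_or_subset hX hY hXY (isCompleteBipartiteSet_cherry hξ.1.symm hξz hxz)
    (by simp) (B1_subset hx) (by simp) hzB with h | h
  · exact not_adj_of_E_eq_empty hEy hzB (hX.1.1.adj_of_not_adj_of_adj hxX (h (by simp)) hyX hxz
      (adj_of_mem_B1_of_mem_B2 hx hy)).symm
  · exact not_adj_of_E_eq_empty hEx' hξ.2 (hY.1.1.adj_of_not_adj_of_adj (h (by simp)) hx'Y
      (h (by simp)) (not_adj_of_mem_B1 hx hx') hξ.1)

theorem neighborSet_eq_singleton_of_E_eq_empty {y y' : V} (hB1 : ∀ t ∈ C.B1, t = x ∨ t = x')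
    (hB2 : ∀ t ∈ C.B2, t = y ∨ t = y') (hy' : y' ∈ C.B2) (hEy' : C.E y' = ∅) (hxX : x ∈ X)
    (hy'X : y' ∈ X) (hdisj : ∀ {ξ}, ξ ∈ C.E x → ¬C.H.Adj y ξ) (hξ : ξ ∈ C.E x) :
    C.H.neighborSet ξ = {x} := by
  ext t
  refine ⟨fun ht => ?_, fun ht => ht ▸ hξ.1.symm⟩
  rcases mem_B1_or_mem_B2 (neighborSet_subset_B_of_E_eq_empty hX hY hXY hx hx' hEx' hx'Y
    hy' hEy' hxX hy'X hξ ht) with h | h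
  · rcases hB1 t h with rfl | rfl
    · rfl
    · exact absurd ht.symm (not_adj_of_E_eq_empty hEx' hξ.2)
  · rcases hB2 t h with rfl | rfl
    · exact absurd ht.symm (hdisj hξ)
    · exact absurd ht.symm (not_adj_of_E_eq_empty hEy' hξ.2)

end EmptyE

variable {v1 v2 u1 u2 : V} (hB1 : ∀ t ∈ C.B1, t = v1 ∨ t = v2)
  (hB2 : ∀ t ∈ C.B2, t = u1 ∨ t = u2) (hv1 : v1 ∈ C.B1) (hv2 : v2 ∈ C.B1) (hu1 : u1 ∈ C.B2)
  (hu2 : u2 ∈ C.B2)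

include hB1 hB2 in
theorem B_subset [DecidableEq V] : C.B ⊆ ↑({v1, v2, u1, u2} : Finset V) := fun t ht => by
  rcases mem_B1_or_mem_B2 ht with h | h
  · rcases hB1 t h with rfl | rfl <;> simp
  · rcases hB2 t h with rfl | rfl <;> simp

section Separated

variable {X Y : Set V} (hX : X ∈ bicliquesMeeting C.H C.B) (hY : Y ∈ bicliquesMeeting C.H C.B)
  (hXY : X ≠ Y) (hv1Y : v1 ∉ Y) (hv2X : v2 ∉ X) (hu1Y : u1 ∉ Y) (hu2X : u2 ∉ X) (hu1X : u1 ∈ X)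
include hX hY hXY hB1 hB2 hv1 hv2 hu1 hu2 hv1Y hv2X hu1Y hu2X hu1X

theorem neighborSet_eq_of_separated (hξ : ξ ∈ C.E v1) :
    C.H.neighborSet ξ = insert v1 (insert u2 (C.E v2)) := by
  have hEv2u1 : C.E v2 = C.E u1 := E_eq_of_notMem hY hX hXY.symm hv2 hu1 hv2X hu1Y
  have hv2ξ : ¬C.H.Adj v2 ξ := not_adj_of_mem_E hX hY hXY hv1 hv1Y hv2 hv2X hξ
  have hu2ξ : C.H.Adj u2 ξ := (E_eq_of_notMem hX hY hXY hv1 hu2 hv1Y hu2X ▸ hξ).1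
  have hpair : ∀ {v}, v ∈ C.E v1 → {v1, v} ⊆ X :=
    pair_subset_of_notMem hX hY hXY (B1_subset hv1) hv1Y
  ext z
  simp only [mem_neighborSet, Set.mem_insert_iff]
  constructor
  · intro hz
    by_cases hzB : z ∈ C.B
    · rcases mem_B1_or_mem_B2 hzB with hz' | hz'
      · rcases hB1 z hz' with rfl | rfl
        · exact Or.inl rfl
        · exact absurd hz.symm hv2ξ
      · rcases hB2 z hz' with rfl | rfl
        · exact absurd (hEv2u1 ▸ ⟨hz.symm, hξ.2⟩ : ξ ∈ C.E v2).1 hv2ξ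
        · exact Or.inr (Or.inl rfl)
    refine Or.inr (Or.inr (hEv2u1 ▸ ⟨?_, hzB⟩))
    by_cases hv1z : C.H.Adj v1 z
    · exact absurd hv1z (hX.1.1.not_adj_of_adj_of_adj (hpair hξ (by simp))
        (hpair hξ (by simp)) (hpair ⟨hv1z, hzB⟩ (by simp)) hξ.1 hz)
    have h := (subset_or_subset hX hY hXY (isCompleteBipartiteSet_cherry hξ.1.symm hz hv1z)
      (by simp) (B1_subset hv1) (by simp) hξ.2).resolve_right fun h => hv1Y (h (by simp))
    exact (hX.1.1.adj_of_not_adj_of_adj (h (by simp)) (h (by simp)) hu1X hv1z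
      (adj_of_mem_B1_of_mem_B2 hv1 hu1)).symm
  · rintro (rfl | rfl | hz)
    · exact hξ.1.symm
    · exact hu2ξ.symm
    · rcases subset_or_subset hX hY hXY (isCompleteBipartiteSet_cherry
        (adj_of_mem_B1_of_mem_B2 hv2 hu2).symm hu2ξ hv2ξ) (by simp) (B2_subset hu2) (by simp)
        hξ.2 with h | h
      · exact absurd (h (by simp)) hv2X
      · exact hY.1.1.adj_of_not_adj_of_adj (h (by simp)) (h (by simp))
          (pair_subset_of_notMem hY hX hXY.symm (B1_subset hv2) hv2X hz (by simp)) hv2ξ hz.1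

theorem false_of_separated (hu2Y : u2 ∈ Y) (hw : w ∈ C.E v1) : False := by
  classical
  have hN : ∀ {v}, v ∈ C.E v1 → C.H.neighborSet v = insert v1 (insert u2 (C.E v2)) :=
    neighborSet_eq_of_separated hB1 hB2 hv1 hv2 hu1 hu2 hX hY hXY hv1Y hv2X hu1Y hu2X hu1X
  have hN' : ∀ {v}, v ∈ C.E v2 → C.H.neighborSet v = insert v2 (insert u1 (C.E v1)) :=
    neighborSet_eq_of_separated (fun t ht => (hB1 t ht).symm) (fun t ht => (hB2 t ht).symm)
      hv2 hv1 hu2 hu1 hY hX hXY.symm hv2X hv1Y hu2X hu1Y hu2Y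
  have hEv1 : ∀ {v}, v ∈ C.E v1 → v = w := fun hv =>
    C.eq_of_neighborSet_eq ((hN hv).trans (hN hw).symm)
  obtain ⟨w', hw', hEv2⟩ : ∃ w', w' ∈ C.E v1 ∪ C.E v2 ∧ ∀ {v}, v ∈ C.E v2 → v = w' := by
    rcases (C.E v2).eq_empty_or_nonempty with h | ⟨w', hw'⟩
    · exact ⟨w, Or.inl hw, fun hv => absurd (h ▸ hv) (Set.notMem_empty _)⟩
    · exact ⟨w', Or.inr hw', fun hv => C.eq_of_neighborSet_eq ((hN' hv).trans (hN' hw').symm)⟩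
  have hE : ∀ v ∈ C.E v1 ∪ C.E v2, v ∈ ({w, w'} : Finset V) := by
    rintro v (hv | hv)
    · simp [hEv1 hv]
    · simp [hEv2 hv]
  refine C.false_of_closed {v1, v2, u1, u2} {w, w'} Finset.card_le_four Finset.card_le_two
    (B_subset hB1 hB2) (fun t ht v hv => hE v ?_) fun v hv => ?_
  · rcases mem_B1_or_mem_B2 ht with h | h
    · rcases hB1 t h with rfl | rfl
      · exact Or.inl hv
      · exact Or.inr hv
    · rcases hB2 t h with rfl | rfl
      · exact Or.inr (E_eq_of_notMem hY hX hXY.symm hv2 h hv2X hu1Y ▸ hv)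
      · exact Or.inl (E_eq_of_notMem hX hY hXY hv1 h hv1Y hu2X ▸ hv)
  have hv : v ∈ C.E v1 ∪ C.E v2 := by
    simp only [Finset.mem_insert, Finset.mem_singleton] at hv
    rcases hv with rfl | rfl
    · exact Or.inl hw
    · exact hw'
  rintro z hz
  rcases hv with hv | hv
  · rw [hN hv] at hz
    rcases hz with rfl | rfl | hz
    · exact Or.inl (B1_subset hv1)
    · exact Or.inl (B2_subset hu2)
    · exact Or.inr (hE z (Or.inr hz))
  · rw [hN' hv] at hz
    rcases hz with rfl | rfl | hz
    · exact Or.inl (B1_subset hv2)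
    · exact Or.inl (B2_subset hu1)
    · exact Or.inr (hE z (Or.inl hz))

end Separated

include hB1 hB2 hv1 hv2 hu1 hu2 in
theorem false_of_E_eq_empty_of_mem {X Y : Set V} (hX : X ∈ bicliquesMeeting C.H C.B)
    (hY : Y ∈ bicliquesMeeting C.H C.B) (hXY : X ≠ Y) (hEv2 : C.E v2 = ∅) (hEu2 : C.E u2 = ∅)
    (hv1X : v1 ∈ X) (hu2X : u2 ∈ X) (hu1Y : u1 ∈ Y) (hv2Y : v2 ∈ Y) (hv1Y : v1 ∈ Y) {w z : V}
    (hw : w ∈ C.E v1) (hz : z ∈ C.E u1) : False := by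
  classical
  have hpu : ∀ {ζ}, ζ ∈ C.E u1 → {u1, ζ} ⊆ Y :=
    pair_subset_of_E_eq_empty (C := C.swap) hY hX hXY.symm hu1 hu2 hEu2 hu2X
  have hdisj : ∀ {ζ}, ζ ∈ C.E u1 → ¬C.H.Adj v1 ζ := fun hζ =>
    hY.1.1.not_adj_of_adj_of_adj hv1Y (hpu hζ (by simp)) (hpu hζ (by simp))
      (adj_of_mem_B1_of_mem_B2 hv1 hu1) hζ.1
  have hNv : ∀ {ξ}, ξ ∈ C.E v1 → C.H.neighborSet ξ = {v1} :=
    neighborSet_eq_singleton_of_E_eq_empty hX hY hXY hv1 hv2 hEv2 hv2Y hB1 hB2 hu2 hEu2 hv1X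
      hu2X fun hξ h => hdisj ⟨h, hξ.2⟩ hξ.1
  have hNu : ∀ {ζ}, ζ ∈ C.E u1 → C.H.neighborSet ζ = {u1} :=
    neighborSet_eq_singleton_of_E_eq_empty (C := C.swap) hY hX hXY.symm hu1 hu2 hEu2 hu2X hB2
      hB1 hv2 hEv2 hu1Y hv2Y hdisj
  refine C.false_of_closed {v1, v2, u1, u2} {w, z} Finset.card_le_four Finset.card_le_two
    (B_subset hB1 hB2) (fun t ht => ?_) fun v hv => ?_
  · rcases mem_B1_or_mem_B2 ht with h | h
    · rcases hB1 t h with rfl | rfl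
      · exact fun v hv => by simp [C.eq_of_neighborSet_eq ((hNv hv).trans (hNv hw).symm)]
      · simp [hEv2]
    · rcases hB2 t h with rfl | rfl
      · exact fun v hv => by simp [C.eq_of_neighborSet_eq ((hNu hv).trans (hNu hz).symm)]
      · simp [hEu2]
  · simp only [Finset.mem_insert, Finset.mem_singleton] at hv
    rcases hv with rfl | rfl
    · simp [hNv hw, B1_subset hv1]
    · simp [hNu hz, B2_subset hu1]

include hB1 hB2 hv1 hv2 hu1 hu2 in
theorem false_of_E_eq_empty {X Y : Set V} (hX : X ∈ bicliquesMeeting C.H C.B)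
    (hY : Y ∈ bicliquesMeeting C.H C.B) (hXY : X ≠ Y) (hEv2 : C.E v2 = ∅) (hEu2 : C.E u2 = ∅)
    (hv1X : v1 ∈ X) (hu2X : u2 ∈ X) (hv2X : v2 ∉ X) (hu1Y : u1 ∈ Y) (hv2Y : v2 ∈ Y)
    (hu2Y : u2 ∉ Y) {w z : V} (hw : w ∈ C.E v1) (hz : z ∈ C.E u1) : False := by
  by_cases hv1Y : v1 ∈ Y
  · exact false_of_E_eq_empty_of_mem hB1 hB2 hv1 hv2 hu1 hu2 hX hY hXY hEv2 hEu2 hv1X hu2X hu1Y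
      hv2Y hv1Y hw hz
  by_cases hu1X : u1 ∈ X
  · exact false_of_E_eq_empty_of_mem (C := C.swap) hB2 hB1 hu1 hu2 hv1 hv2 hY hX hXY.symm hEu2
      hEv2 hu1Y hv2Y hv1X hu2X hu1X hz hw
  exact false_of_separated hB1 (fun t ht => (hB2 t ht).symm) hv1 hv2 hu2 hu1 hX hY hXY hv1Y hv2X
    hu2Y hu1X hu2X hu1Y hw

include hv1 hv2 hu1 hu2 in
theorem false_of_subset_of_E_eq_empty {X : Set V} (hX : X ∈ bicliquesMeeting C.H C.B)
    (hF : C.E u2 ⊆ C.E u1) (hEv2 : C.E v2 = ∅) (hv1X : v1 ∈ X) (hu1X : u1 ∈ X) (hv2X : v2 ∉ X)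
    (hu2X : u2 ∉ X) {w z : V} (hw : w ∈ C.E v1) (hwX : w ∈ X) (hz : z ∈ C.E u1) : False := by
  obtain ⟨Y, hY, hsub⟩ := exists_mem_bicliquesMeeting_superset (isCompleteBipartiteSet_cherry
    (adj_of_mem_B1_of_mem_B2 hv2 hu1).symm hz.1 (not_adj_of_E_eq_empty hEv2 hz.2)) (by simp)
    (B2_subset hu1) (by simp) hz.2
  have hXY : X ≠ Y := fun h => hv2X (h ▸ hsub (by simp))
  have hu1w : ¬C.H.Adj u1 w := hX.1.1.not_adj_of_adj_of_adj hu1X hv1X hwX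
    (adj_of_mem_B1_of_mem_B2 hv1 hu1).symm hw.1
  rcases subset_or_subset hX hY hXY (isCompleteBipartiteSet_cherry
    (adj_of_mem_B1_of_mem_B2 hv1 hu2) hw.1 fun h => hu1w (hF ⟨h, hw.2⟩).1) (by simp)
    (B1_subset hv1) (by simp) hw.2 with h | h
  · exact hu2X (h (by simp))
  · exact not_adj_of_E_eq_empty hEv2 hw.2 (hY.1.1.adj_of_not_adj_of_adj (h (by simp))
      (hsub (by simp)) (h (by simp)) (not_adj_of_mem_B1 hv1 hv2) hw.1)

include hB1 hB2 hv1 hv2 hu1 hu2 in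
theorem false_of_subset_of_mem {X : Set V} (hX : X ∈ bicliquesMeeting C.H C.B)
    (hE : C.E v2 ⊆ C.E v1) (hF : C.E u2 ⊆ C.E u1) (hv1X : v1 ∈ X) (hu1X : u1 ∈ X)
    (hv2X : v2 ∉ X) (hu2X : u2 ∉ X) {w z : V} (hw : w ∈ C.E v1) (hwX : w ∈ X)
    (hz : z ∈ C.E u1) (hzX : z ∈ X) : False := by
  rcases (C.E v2).eq_empty_or_nonempty with hEv2 | ⟨ω, hω⟩
  · exact false_of_subset_of_E_eq_empty hv1 hv2 hu1 hu2 hX hF hEv2 hv1X hu1X hv2X hu2X hw hwX hz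
  rcases (C.E u2).eq_empty_or_nonempty with hEu2 | ⟨ζ, hζ⟩
  · exact false_of_subset_of_E_eq_empty (C := C.swap) hu1 hu2 hv1 hv2 hX hE hEu2 hu1X hv1X hu2X
      hv2X hz hzX hw
  obtain ⟨Y, hY, hsub⟩ := exists_mem_bicliquesMeeting_superset (isCompleteBipartiteSet_cherry
    (hF hζ).1.symm hζ.1.symm (not_adj_of_mem_B2 hu1 hu2)) (by simp) (B2_subset hu1) (by simp)
    hζ.2
  have hXY : X ≠ Y := fun h => hu2X (h ▸ hsub (by simp))
  rcases subset_or_subset hX hY hXY (isCompleteBipartiteSet_cherry (hE hω).1.symm hω.1.symm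
    (not_adj_of_mem_B1 hv1 hv2)) (by simp) (B1_subset hv1) (by simp) hω.2 with h | h
  · exact hv2X (h (by simp))
  obtain ⟨u, hu, hωu⟩ := exists_adj_B2_of_forall_adj_B1 hω.2 fun t ht => by
    rcases hB1 t ht with rfl | rfl
    · exact (hE hω).1.symm
    · exact hω.1.symm
  have huY : u ∈ Y := by rcases hB2 u hu with rfl | rfl <;> exact hsub (by simp)
  exact hY.1.1.not_adj_of_adj_of_adj (h (by simp)) (h (by simp)) huY (hE hω).1.symm
    (adj_of_mem_B1_of_mem_B2 hv1 hu) hωu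

include hB1 hB2 hv1 hv2 hu1 hu2 in
theorem false_of_subset_of_subset (hnv : v1 ≠ v2) (hnu : u1 ≠ u2) (hE : C.E v2 ⊆ C.E v1)
    (hF : C.E u2 ⊆ C.E u1) : False := by
  obtain ⟨w, hw, hv2w⟩ := exists_mem_E_not_adj_of_subset hv1 hv2 hnv hE
  obtain ⟨z, hz, hu2z⟩ : ∃ z ∈ C.E u1, ¬C.H.Adj u2 z :=
    exists_mem_E_not_adj_of_subset (C := C.swap) hu1 hu2 hnu hF
  obtain ⟨X, hX, hv1X, hwX, hv2X⟩ := exists_separating hv1 hv2 hw hv2w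
  obtain ⟨Y, hY, hu1Y, hzY, hu2Y⟩ : ∃ Y ∈ bicliquesMeeting C.H C.B, u1 ∈ Y ∧ z ∈ Y ∧ u2 ∉ Y :=
    exists_separating (C := C.swap) hu1 hu2 hz hu2z
  by_cases hXY : X = Y
  · subst hXY
    exact false_of_subset_of_mem hB1 hB2 hv1 hv2 hu1 hu2 hX hE hF hv1X hu1Y hv2X hu2Y hw hwX hz
      hzY
  have hEv2u2 : C.E v2 = C.E u2 := E_eq_of_notMem hY hX (Ne.symm hXY) hv2 hu2 hv2X hu2Y
  have hEv2 : C.E v2 = ∅ := by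
    refine Set.eq_empty_of_forall_notMem fun ω hω => ?_
    rcases subset_or_subset hX hY hXY (isCompleteBipartiteSet_cherry (hE hω).1.symm hω.1.symm
      (not_adj_of_mem_B1 hv1 hv2)) (by simp) (B1_subset hv1) (by simp) hω.2 with h | h
    · exact hv2X (h (by simp))
    · exact hY.1.1.not_adj_of_adj_of_adj (h (by simp)) (h (by simp)) hu1Y (hE hω).1.symm
        (adj_of_mem_B1_of_mem_B2 hv1 hu1) (hF (hEv2u2 ▸ hω)).1.symm
  have hEu2 : C.E u2 = ∅ := hEv2u2 ▸ hEv2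
  have hv2Y : v2 ∈ Y := ((subset_or_subset hX hY hXY (isCompleteBipartiteSet_cherry
    (adj_of_mem_B1_of_mem_B2 hv2 hu1).symm hz.1 (not_adj_of_E_eq_empty hEv2 hz.2)) (by simp)
    (B2_subset hu1) (by simp) hz.2).resolve_left fun h => hv2X (h (by simp))) (by simp)
  have hu2X : u2 ∈ X := ((subset_or_subset hX hY hXY (isCompleteBipartiteSet_cherry
    (adj_of_mem_B1_of_mem_B2 hv1 hu2) hw.1 (not_adj_of_E_eq_empty hEu2 hw.2)) (by simp)
    (B1_subset hv1) (by simp) hw.2).resolve_right fun h => hu2Y (h (by simp))) (by simp)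
  exact false_of_E_eq_empty hB1 hB2 hv1 hv2 hu1 hu2 hX hY hXY hEv2 hEu2 hv1X hu2X hv2X hu1Y hv2Y
    hu2Y hw hz

include hv1 hv2 in
theorem false_of_subset_of_mem_of_mem (hE : C.E v2 ⊆ C.E v1) {X Y : Set V} (hX : X ∈ bicliquesMeeting C.H C.B)
    (hY : Y ∈ bicliquesMeeting C.H C.B) (hXY : X ≠ Y) {u z : V} (hu : u ∈ C.B2)
    (hz : z ∈ C.E u) (hv1X : v1 ∈ X) (hv2X : v2 ∉ X) (huX : u ∈ X) (hzX : z ∈ X) (huY : u ∉ Y) :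
    False := by
  have hv1z : ¬C.H.Adj v1 z :=
    hX.1.1.not_adj_of_adj_of_adj hv1X huX hzX (adj_of_mem_B1_of_mem_B2 hv1 hu) hz.1
  rcases subset_or_subset hX hY hXY (isCompleteBipartiteSet_cherry
    (adj_of_mem_B1_of_mem_B2 hv2 hu).symm hz.1 fun h => hv1z (hE ⟨h, hz.2⟩).1) (by simp)
    (B2_subset hu) (by simp) hz.2 with h | h
  · exact hv2X (h (by simp))
  · exact huY (h (by simp))

include hv1 hv2 hu1 hu2 in
theorem false_of_subset_of_incomparable (hnv : v1 ≠ v2) (hE : C.E v2 ⊆ C.E v1)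
    (hF12 : ¬C.E u1 ⊆ C.E u2) (hF21 : ¬C.E u2 ⊆ C.E u1) : False := by
  obtain ⟨w, hw, hv2w⟩ := exists_mem_E_not_adj_of_subset hv1 hv2 hnv hE
  obtain ⟨Z, hZ, hv1Z, -, hv2Z⟩ := exists_separating hv1 hv2 hw hv2w
  obtain ⟨z1, hz1, hu2z1⟩ := exists_mem_E_not_adj hF12
  obtain ⟨z2, hz2, hu1z2⟩ := exists_mem_E_not_adj hF21
  obtain ⟨X, hX, hu1X, hz1X, hu2X⟩ : ∃ X ∈ bicliquesMeeting C.H C.B, u1 ∈ X ∧ z1 ∈ X ∧ u2 ∉ X :=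
    exists_separating (C := C.swap) hu1 hu2 hz1 hu2z1
  obtain ⟨Y, hY, hu2Y, hz2Y, hu1Y⟩ : ∃ Y ∈ bicliquesMeeting C.H C.B, u2 ∈ Y ∧ z2 ∈ Y ∧ u1 ∉ Y :=
    exists_separating (C := C.swap) hu2 hu1 hz2 hu1z2
  have hXY : X ≠ Y := fun h => hu1Y (h ▸ hu1X)
  rcases eq_or_eq hX hY hXY hZ with rfl | rfl
  · exact false_of_subset_of_mem_of_mem hv1 hv2 hE hZ hY hXY hu1 hz1 hv1Z hv2Z hu1X hz1X hu1Y
  · exact false_of_subset_of_mem_of_mem hv1 hv2 hE hZ hX hXY.symm hu2 hz2 hv1Z hv2Z hu2Y hz2Y hu2X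

include hB1 hB2 hv1 hv2 hu1 hu2 in
theorem false_of_incomparable_of_incomparable (hE12 : ¬C.E v1 ⊆ C.E v2)
    (hE21 : ¬C.E v2 ⊆ C.E v1) (hF12 : ¬C.E u1 ⊆ C.E u2) (hF21 : ¬C.E u2 ⊆ C.E u1) : False := by
  obtain ⟨w, hw, hv2w⟩ := exists_mem_E_not_adj hE12
  obtain ⟨X, hX, hv1X, -, hv2X⟩ := exists_separating hv1 hv2 hw hv2w
  obtain ⟨Y, hY, hv2Y, hv1Y⟩ := exists_separating_of_not_subset hv2 hv1 hE21
  have hXY : X ≠ Y := fun h => hv1Y (h ▸ hv1X)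
  obtain ⟨Z, hZ, hu1Z, hu2Z⟩ : ∃ Z ∈ bicliquesMeeting C.H C.B, u1 ∈ Z ∧ u2 ∉ Z :=
    exists_separating_of_not_subset (C := C.swap) hu1 hu2 hF12
  obtain ⟨Z', hZ', hu2Z', hu1Z'⟩ : ∃ Z ∈ bicliquesMeeting C.H C.B, u2 ∈ Z ∧ u1 ∉ Z :=
    exists_separating_of_not_subset (C := C.swap) hu2 hu1 hF21
  rcases eq_or_eq hX hY hXY hZ with rfl | rfl <;> rcases eq_or_eq hX hY hXY hZ' with rfl | rfl
  · exact hu1Z' hu1Z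
  · exact false_of_separated hB1 hB2 hv1 hv2 hu1 hu2 hZ hZ' hXY hv1Y hv2X hu1Z' hu2Z hu1Z hu2Z'
      hw
  · exact false_of_separated hB1 (fun t ht => (hB2 t ht).symm) hv1 hv2 hu2 hu1 hZ' hZ hXY hv1Y
      hv2X hu2Z hu1Z' hu2Z' hu1Z hw
  · exact hu1Z' hu1Z

include hB1 hB2 hv1 hv2 hu1 hu2 in
theorem false_of_subset (hnv : v1 ≠ v2) (hnu : u1 ≠ u2) (hE : C.E v2 ⊆ C.E v1) : False := by
  by_cases hF : C.E u2 ⊆ C.E u1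
  · exact false_of_subset_of_subset hB1 hB2 hv1 hv2 hu1 hu2 hnv hnu hE hF
  by_cases hF' : C.E u1 ⊆ C.E u2
  · exact false_of_subset_of_subset hB1 (fun t ht => (hB2 t ht).symm) hv1 hv2 hu2 hu1 hnv
      hnu.symm hE hF'
  exact false_of_subset_of_incomparable hv1 hv2 hu1 hu2 hnv hE hF' hF

end Square

theorem false_of_square {v1 v2 u1 u2 : V} (hB1 : ∀ t ∈ C.B1, t = v1 ∨ t = v2)
    (hB2 : ∀ t ∈ C.B2, t = u1 ∨ t = u2) (hv1 : v1 ∈ C.B1) (hv2 : v2 ∈ C.B1) (hu1 : u1 ∈ C.B2)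
    (hu2 : u2 ∈ C.B2) (hnv : v1 ≠ v2) (hnu : u1 ≠ u2) : False := by
  have hB1' : ∀ t ∈ C.B1, t = v2 ∨ t = v1 := fun t ht => (hB1 t ht).symm
  have hB2' : ∀ t ∈ C.B2, t = u2 ∨ t = u1 := fun t ht => (hB2 t ht).symm
  by_cases hE : C.E v2 ⊆ C.E v1
  · exact Square.false_of_subset hB1 hB2 hv1 hv2 hu1 hu2 hnv hnu hE
  by_cases hE' : C.E v1 ⊆ C.E v2
  · exact Square.false_of_subset hB1' hB2 hv2 hv1 hu1 hu2 hnv.symm hnu hE'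
  by_cases hF : C.E u2 ⊆ C.E u1
  · exact Square.false_of_subset (C := C.swap) hB2 hB1 hu1 hu2 hv1 hv2 hnu hnv hF
  by_cases hF' : C.E u1 ⊆ C.E u2
  · exact Square.false_of_subset (C := C.swap) hB2' hB1 hu2 hu1 hv1 hv2 hnu.symm hnv hF'
  exact Square.false_of_incomparable_of_incomparable hB1 hB2 hv1 hv2 hu1 hu2 hE' hE hF' hF

end LowDegreeBiclique

/-- Lemma 1: in a connected false-twin-free graph on at least 7 vertices, a biclique
containing a `K_{1,3}` or equal to a `C_4` meets at least 3 other bicliques. -/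
theorem stmt_2 {V : Type} [Fintype V] (H : SimpleGraph V) (hconn : H.Connected)
    (htwinfree : ∀ v w : V, v ≠ w → H.neighborSet v ≠ H.neighborSet w)
    (hcard : 7 ≤ Fintype.card V)
    (B B1 B2 : Set V) (hB : IsBiclique H B)
    (hpart : IsCBP H B1 B2) (hunion : B1 ∪ B2 = B)
    (hsize : 3 ≤ B1.ncard ∨ 3 ≤ B2.ncard ∨ (B1.ncard = 2 ∧ B2.ncard = 2)) :
    3 ≤ {S : Set V | IsBiclique H S ∧ S ≠ B ∧ (S ∩ B).Nonempty}.ncard := by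
  by_contra! hlt
  let C : LowDegreeBiclique V :=
    ⟨H, B, B1, B2, hconn, htwinfree, hcard, hB, hpart, hunion, Nat.le_of_lt_succ hlt⟩
  rcases hsize with h3 | h3 | ⟨h1, h2⟩
  · obtain ⟨a, b, c, ha, hb, hc, hab, hac, hbc⟩ := (Set.two_lt_ncard_iff (Set.toFinite _)).1 h3
    exact C.false_of_claw ha hb hc hab hac hbc
  · obtain ⟨a, b, c, ha, hb, hc, hab, hac, hbc⟩ := (Set.two_lt_ncard_iff (Set.toFinite _)).1 h3
    exact C.swap.false_of_claw ha hb hc hab hac hbc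
  · obtain ⟨v1, v2, hnv, rfl⟩ := Set.ncard_eq_two.1 h1
    obtain ⟨u1, u2, hnu, rfl⟩ := Set.ncard_eq_two.1 h2
    exact C.false_of_square (fun _ h => h) (fun _ h => h) (Or.inl rfl) (Or.inr rfl) (Or.inl rfl)
      (Or.inr rfl) hnv hnu
end

section
/- Let H be a finite simple graph and let B be a biclique of H isomorphic to the star K_{1,s} with s ≥ 5 (one part consists of a single center vertex and the other part consists of s pairwise nonadjacent leaves), and suppose that at most 2 vertices of H lie outside B. Then H has a pair of false twins, i.e., two distinct vertices with equal open neighborhoods. -/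
open SimpleGraph

variable {V : Type}

/-- If `B` is a star biclique `K_{1,s}` with `s ≥ 5` and at most 2 vertices of `H` lie
outside `B`, then `H` has a pair of false twins. -/
theorem stmt_10 {V : Type} [Fintype V] (H : SimpleGraph V)
    (B : Set V) (hB : IsBiclique H B) (c0 : V) (L : Set V)
    (hpart : IsCBP H {c0} L) (hunion : {c0} ∪ L = B) (hs : 5 ≤ L.ncard)
    (hout : Bᶜ.ncard ≤ 2) :
    ∃ v w : V, v ≠ w ∧ H.neighborSet v = H.neighborSet w := by
  classical
  obtain ⟨-, -, hdisj, hI1, hI2, hadj⟩ := hpart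
  -- key: for v ∈ L, N(v) = {c0} ∪ (N(v) ∩ Bᶜ)
  have key : ∀ v ∈ L, H.neighborSet v = {c0} ∪ (H.neighborSet v ∩ Bᶜ) := by
    intro v hv
    ext u
    constructor
    · intro hu
      by_cases hub : u ∈ B
      · rw [← hunion] at hub
        rcases hub with hu0 | huL
        · exact Or.inl hu0
        · exact absurd hu (fun h => hI2 v hv u huL h)
      · exact Or.inr ⟨hu, hub⟩
    · rintro (rfl | ⟨hu, -⟩)
      · exact (hadj u rfl v hv).symm
      · exact hu
  -- pigeonhole on f v = N(v) ∩ Bᶜ as finsets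
  set f : V → Finset V := fun v => (H.neighborSet v ∩ Bᶜ).toFinset with hf
  have hLcard : 5 ≤ L.toFinset.card := by rwa [Set.ncard_eq_toFinset_card'] at hs
  have houtcard : Bᶜ.toFinset.card ≤ 2 := by rwa [Set.ncard_eq_toFinset_card'] at hout
  have hmaps : ∀ v ∈ L.toFinset, f v ∈ Bᶜ.toFinset.powerset := by
    intro v _
    rw [Finset.mem_powerset]
    intro u hu
    simp only [hf, Set.mem_toFinset] at hu ⊢
    exact hu.2
  have hcard : Bᶜ.toFinset.powerset.card < L.toFinset.card := by
    have : Bᶜ.toFinset.powerset.card ≤ 2 ^ 2 := by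
      rw [Finset.card_powerset]
      exact Nat.pow_le_pow_right (by norm_num) houtcard
    omega
  obtain ⟨v, hv, w, hw, hvw, hfvw⟩ :=
    Finset.exists_ne_map_eq_of_card_lt_of_maps_to hcard hmaps
  rw [Set.mem_toFinset] at hv hw
  refine ⟨v, w, hvw, ?_⟩
  have : H.neighborSet v ∩ Bᶜ = H.neighborSet w ∩ Bᶜ := by
    have := congrArg (fun s : Finset V => (s : Set V)) hfvw
    simpa [hf] using this
  rw [key v hv, key w hw, this]
end

section
/- For every k ≥ 7, the biclique graph KB(C_k) is isomorphic to the square of the cycle C_k, i.e., to the graph with vertex set Z_k in which i and j are adjacent if and only if i − j ≡ ±1 or ±2 (mod k). -/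
open SimpleGraph

variable {V : Type}

/-- The square of the cycle `C_k`: `i` adjacent to `j` iff `i - j ≡ ±1, ±2 (mod k)`. -/
def cycleSquare (k : ℕ) : SimpleGraph (ZMod k) :=
  SimpleGraph.fromRel fun i j => i = j + 1 ∨ i = j + 2

namespace Stmt12Aux

variable {k : ℕ}

lemma zmodne (hk : 7 ≤ k) {n : ℕ} (h0 : 0 < n) (hlt : n < 7) : (n : ZMod k) ≠ 0 := by
  haveI : NeZero k := ⟨by omega⟩
  rw [Ne, ZMod.natCast_eq_zero_iff]
  intro hd
  have := Nat.le_of_dvd h0 hd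
  omega

lemma ne1 (hk : 7 ≤ k) : (1 : ZMod k) ≠ 0 := by
  simpa using zmodne hk (n := 1) (by norm_num) (by norm_num)

lemma ne2 (hk : 7 ≤ k) : (2 : ZMod k) ≠ 0 := by
  simpa using zmodne hk (n := 2) (by norm_num) (by norm_num)

lemma ne3 (hk : 7 ≤ k) : (3 : ZMod k) ≠ 0 := by
  simpa using zmodne hk (n := 3) (by norm_num) (by norm_num)

lemma ne4 (hk : 7 ≤ k) : (4 : ZMod k) ≠ 0 := by
  simpa using zmodne hk (n := 4) (by norm_num) (by norm_num)

lemma adj_iff {i j : ZMod k} : (cycle k).Adj i j ↔ i ≠ j ∧ (i = j + 1 ∨ j = i + 1) := by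
  simp [cycle]

/-- the triple `{c-1, c, c+1}` -/
def tri (k : ℕ) (c : ZMod k) : Set (ZMod k) := {c - 1, c, c + 1}

lemma mem_tri {c y : ZMod k} : y ∈ tri k c ↔ y = c - 1 ∨ y = c ∨ y = c + 1 := by
  simp [tri]

lemma tri_cbp (hk : 7 ≤ k) (c : ZMod k) : IsCBP (cycle k) {c} {c - 1, c + 1} := by
  refine ⟨⟨c, rfl⟩, ⟨c - 1, Or.inl rfl⟩, ?_, ?_, ?_, ?_⟩
  · rw [Set.disjoint_left]
    rintro a rfl hmem
    simp only [Set.mem_insert_iff, Set.mem_singleton_iff] at hmem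
    rcases hmem with h | h
    · exact ne1 hk (by linear_combination h)
    · exact ne1 hk (by linear_combination -h)
  · rintro a rfl b rfl h
    exact h.ne rfl
  · intro a ha b hb h
    simp only [Set.mem_insert_iff, Set.mem_singleton_iff] at ha hb
    rw [adj_iff] at h
    rcases ha with rfl | rfl <;> rcases hb with rfl | rfl
    · exact h.1 rfl
    · rcases h.2 with h' | h'
      · exact ne3 hk (by linear_combination -h')
      · exact ne1 hk (by linear_combination h')
    · rcases h.2 with h' | h'
      · exact ne1 hk (by linear_combination h')
      · exact ne3 hk (by linear_combination -h')
    · exact h.1 rfl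
  · intro a ha b hb
    simp only [Set.mem_singleton_iff] at ha
    simp only [Set.mem_insert_iff, Set.mem_singleton_iff] at hb
    subst ha
    rw [adj_iff]
    rcases hb with rfl | rfl
    · exact ⟨fun h => ne1 hk (by linear_combination h), Or.inl (by ring)⟩
    · exact ⟨fun h => ne1 hk (by linear_combination -h), Or.inr rfl⟩

lemma tri_cbs (hk : 7 ≤ k) (c : ZMod k) : IsCompleteBipartiteSet (cycle k) (tri k c) := by
  refine ⟨{c}, {c - 1, c + 1}, tri_cbp hk c, ?_⟩
  ext x
  simp only [Set.mem_union, Set.mem_insert_iff, Set.mem_singleton_iff, mem_tri]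
  tauto

lemma cbp_subset (hk : 7 ≤ k) {B1 B2 : Set (ZMod k)} (h : IsCBP (cycle k) B1 B2) :
    ∃ c, B1 ∪ B2 ⊆ tri k c := by
  obtain ⟨⟨a, ha⟩, ⟨x, hx⟩, hdisj, hi1, hi2, hadj⟩ := h
  have hax := (adj_iff.mp (hadj a ha x hx)).2
  rcases hax with hx1 | hx1
  · -- a = x + 1 : the B1 vertex a is above x
    subst hx1
    -- B1 ⊆ {x-1, x+1}, B2 ⊆ {x, x+2}
    have hB1 : ∀ b ∈ B1, b = x - 1 ∨ b = x + 1 := by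
      intro b hb
      rcases (adj_iff.mp (hadj b hb x hx)).2 with h' | h'
      · exact Or.inr h'
      · exact Or.inl (by linear_combination -h')
    have hB2 : ∀ b ∈ B2, b = x ∨ b = x + 2 := by
      intro b hb
      rcases (adj_iff.mp (hadj (x + 1) ha b hb)).2 with h' | h'
      · exact Or.inl (by linear_combination -h')
      · exact Or.inr (by linear_combination h')
    by_cases hm : x - 1 ∈ B1
    · refine ⟨x, ?_⟩
      have hB2' : ∀ b ∈ B2, b = x := by
        intro b hb
        rcases hB2 b hb with h' | h'
        · exact h'
        · exfalso
          have h2 := (adj_iff.mp (hadj (x - 1) hm b hb)).2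
          rw [h'] at h2
          rcases h2 with h2 | h2
          · exact ne4 hk (by linear_combination -h2)
          · exact ne2 hk (by linear_combination h2)
      rintro y (hy | hy) <;> rw [mem_tri]
      · rcases hB1 y hy with h' | h'
        · exact Or.inl h'
        · exact Or.inr (Or.inr h')
      · exact Or.inr (Or.inl (hB2' y hy))
    · refine ⟨x + 1, ?_⟩
      rintro y (hy | hy) <;> rw [mem_tri]
      · rcases hB1 y hy with h' | h'
        · exact absurd (h' ▸ hy) hm
        · exact Or.inr (Or.inl h')
      · rcases hB2 y hy with h' | h'
        · exact Or.inl (by rw [h']; ring)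
        · exact Or.inr (Or.inr (by rw [h']; ring))
  · -- x = a + 1 : the B2 vertex x is above a
    subst hx1
    have hB1 : ∀ b ∈ B1, b = a ∨ b = a + 2 := by
      intro b hb
      rcases (adj_iff.mp (hadj b hb (a + 1) hx)).2 with h' | h'
      · exact Or.inr (by linear_combination h')
      · exact Or.inl (by linear_combination -h')
    have hB2 : ∀ b ∈ B2, b = a - 1 ∨ b = a + 1 := by
      intro b hb
      rcases (adj_iff.mp (hadj a ha b hb)).2 with h' | h'
      · exact Or.inl (by linear_combination -h')
      · exact Or.inr h'
    by_cases hm : a + 2 ∈ B1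
    · refine ⟨a + 1, ?_⟩
      have hB2' : ∀ b ∈ B2, b = a + 1 := by
        intro b hb
        rcases hB2 b hb with h' | h'
        · exfalso
          have h2 := (adj_iff.mp (hadj (a + 2) hm b hb)).2
          rw [h'] at h2
          rcases h2 with h2 | h2
          · exact ne2 hk (by linear_combination h2)
          · exact ne4 hk (by linear_combination -h2)
        · exact h'
      rintro y (hy | hy) <;> rw [mem_tri]
      · rcases hB1 y hy with h' | h'
        · exact Or.inl (by rw [h']; ring)
        · exact Or.inr (Or.inr (by rw [h']; ring))
      · exact Or.inr (Or.inl (hB2' y hy))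
    · refine ⟨a, ?_⟩
      rintro y (hy | hy) <;> rw [mem_tri]
      · rcases hB1 y hy with h' | h'
        · exact Or.inr (Or.inl h')
        · exact absurd (h' ▸ hy) hm
      · rcases hB2 y hy with h' | h'
        · exact Or.inl h'
        · exact Or.inr (Or.inr h')

lemma tri_subset (hk : 7 ≤ k) {c d : ZMod k} (h : tri k c ⊆ tri k d) : c = d := by
  have h0 := mem_tri.mp (h (mem_tri.mpr (Or.inr (Or.inl rfl))))
  have hp := mem_tri.mp (h (mem_tri.mpr (Or.inr (Or.inr rfl))))
  have hm := mem_tri.mp (h (mem_tri.mpr (Or.inl rfl)))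
  rcases h0 with h0 | h0 | h0
  · exfalso
    rcases hm with h' | h' | h'
    · exact ne1 hk (by linear_combination h0 - h')
    · exact ne2 hk (by linear_combination h0 - h')
    · exact ne3 hk (by linear_combination h0 - h')
  · exact h0
  · exfalso
    rcases hp with h' | h' | h'
    · exact ne3 hk (by linear_combination h' - h0)
    · exact ne2 hk (by linear_combination h' - h0)
    · exact ne1 hk (by linear_combination h' - h0)

lemma tri_biclique (hk : 7 ≤ k) (c : ZMod k) : IsBiclique (cycle k) (tri k c) := by
  refine ⟨tri_cbs hk c, fun T hT hsub => ?_⟩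
  obtain ⟨B1, B2, hcbp, hun⟩ := hT
  obtain ⟨d, hd⟩ := cbp_subset hk hcbp
  rw [hun] at hd
  have : c = d := tri_subset hk (hsub.trans hd)
  subst this
  exact hsub.antisymm hd

lemma biclique_eq (hk : 7 ≤ k) {S : Set (ZMod k)} (hS : IsBiclique (cycle k) S) :
    ∃ c, S = tri k c := by
  obtain ⟨⟨B1, B2, hcbp, hun⟩, hmax⟩ := hS
  obtain ⟨c, hc⟩ := cbp_subset hk hcbp
  exact ⟨c, hmax (tri k c) (tri_cbs hk c) (hun ▸ hc)⟩

lemma tri_inter {c d : ZMod k} :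
    (tri k c ∩ tri k d).Nonempty ↔
      (c = d ∨ c = d + 1 ∨ c = d + 2 ∨ d = c + 1 ∨ d = c + 2) := by
  constructor
  · rintro ⟨e, he1, he2⟩
    rw [mem_tri] at he1 he2
    rcases he1 with h1 | h1 | h1 <;> rcases he2 with h2 | h2 | h2
    · exact Or.inl (by linear_combination h2 - h1)
    · exact Or.inr (Or.inl (by linear_combination h2 - h1))
    · exact Or.inr (Or.inr (Or.inl (by linear_combination h2 - h1)))
    · exact Or.inr (Or.inr (Or.inr (Or.inl (by linear_combination h1 - h2))))
    · exact Or.inl (by linear_combination h2 - h1)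
    · exact Or.inr (Or.inl (by linear_combination h2 - h1))
    · exact Or.inr (Or.inr (Or.inr (Or.inr (by linear_combination h1 - h2))))
    · exact Or.inr (Or.inr (Or.inr (Or.inl (by linear_combination h1 - h2))))
    · exact Or.inl (by linear_combination h2 - h1)
  · rintro (h | h | h | h | h)
    · exact ⟨c, mem_tri.mpr (Or.inr (Or.inl rfl)), mem_tri.mpr (Or.inr (Or.inl h))⟩
    · exact ⟨d, mem_tri.mpr (Or.inl (by rw [h]; ring)), mem_tri.mpr (Or.inr (Or.inl rfl))⟩
    · exact ⟨d + 1, mem_tri.mpr (Or.inl (by rw [h]; ring)),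
        mem_tri.mpr (Or.inr (Or.inr rfl))⟩
    · exact ⟨c, mem_tri.mpr (Or.inr (Or.inl rfl)), mem_tri.mpr (Or.inl (by rw [h]; ring))⟩
    · exact ⟨c + 1, mem_tri.mpr (Or.inr (Or.inr rfl)),
        mem_tri.mpr (Or.inl (by rw [h]; ring))⟩

end Stmt12Aux

open Stmt12Aux


/-- For `k ≥ 7`, `KB(C_k)` is isomorphic to the square of `C_k`. -/
theorem stmt_12 (k : ℕ) (hk : 7 ≤ k) :
    Nonempty (KB (cycle k) ≃g cycleSquare k) := by
  let f : ZMod k → {S : Set (ZMod k) // IsBiclique (cycle k) S} :=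
    fun c => ⟨tri k c, tri_biclique hk c⟩
  have hfinj : Function.Injective f := by
    intro c d h
    exact tri_subset hk (le_of_eq (congrArg Subtype.val h))
  have hfsurj : Function.Surjective f := by
    rintro ⟨S, hS⟩
    obtain ⟨c, hc⟩ := biclique_eq hk hS
    exact ⟨c, Subtype.ext hc.symm⟩
  let e : ZMod k ≃ {S : Set (ZMod k) // IsBiclique (cycle k) S} :=
    Equiv.ofBijective f ⟨hfinj, hfsurj⟩
  refine ⟨(RelIso.mk e ?_).symm⟩
  intro c d
  show (KB (cycle k)).Adj (f c) (f d) ↔ (cycleSquare k).Adj c d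
  have hne : f c ≠ f d ↔ c ≠ d := not_congr ⟨fun h => hfinj h, fun h => h ▸ rfl⟩
  have h1 : (f c).1 = tri k c := rfl
  have h2 : (f d).1 = tri k d := rfl
  simp only [KB, cycleSquare, SimpleGraph.fromRel_adj, hne, h1, h2]
  rw [Set.inter_comm (tri k d)]
  simp only [or_self]
  rw [tri_inter]
  constructor
  · rintro ⟨hcd, h⟩
    exact ⟨hcd, by tauto⟩
  · rintro ⟨hcd, h⟩
    exact ⟨hcd, by tauto⟩
end
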